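/- arXiv:2403.09187 — 8 statements merged into one kernel-verified Lean document; each statement's English description precedes it below -/
import Mathlib

section
/- The function h(x) = sech((2L+1)·arcsech(x)) is monotonically increasing and convex on the interval x ∈ (0,1). -/
/-- Inverse hyperbolic cosine. -/
noncomputable def arcosh (x : ℝ) : ℝ := Real.log (x + Real.sqrt (x ^ 2 - 1))

/-- Hyperbolic secant. -/
noncomputable def sech (x : ℝ) : ℝ := 1 / Real.cosh x

/-- Inverse hyperbolic secant on `(0,1)`: `arcsech x = arcosh (1/x)`. -/
noncomputable def arcsech (x : ℝ) : ℝ := arcosh (1 / x)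

/-!
With `t = arcsech x` (so `x = sech t`) and `Q = sechTanh = sinh / cosh² = -sech'`, the chain rule
gives `h'(x) = c Q(c t) / Q(t) > 0` for `c = 2L + 1`. Since `t` decreases in `x`, convexity of `h`
amounts to `t ↦ Q(c t) / Q(t)` decreasing on `(0, ∞)`. Its logarithmic derivative is
`c R(c t) - R(t)` with `R = Q' / Q = sechTanhLogDeriv`, which is `≤ 0` for `c ≥ 1` because the
elasticity `s ↦ s R(s)` decreases; that comes down to `tanh s ≤ s`.
-/

open Real Set

lemma antitoneOn_of_hasDerivAt_nonpos {D : Set ℝ} {f f' : ℝ → ℝ} (hD : Convex ℝ D)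
    (hDo : IsOpen D) (hf : ∀ x ∈ D, HasDerivAt f (f' x) x) (hf' : ∀ x ∈ D, f' x ≤ 0) :
    AntitoneOn f D :=
  antitoneOn_of_hasDerivWithinAt_nonpos hD (fun x hx => (hf x hx).continuousAt.continuousWithinAt)
    (by rw [hDo.interior_eq]; exact fun x hx => (hf x hx).hasDerivWithinAt)
    (by rwa [hDo.interior_eq])

lemma sinh_le_mul_cosh {u : ℝ} (hu : 0 ≤ u) : sinh u ≤ u * cosh u := by
  have hmono : MonotoneOn (fun u => u * cosh u - sinh u) (Ici 0) := by
    refine monotoneOn_of_hasDerivWithinAt_nonneg (f' := fun u => u * sinh u) (convex_Ici 0)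
      (by fun_prop) (fun u _ => ?_) (fun u hu => ?_)
    · refine (((hasDerivAt_id' u).fun_mul (hasDerivAt_cosh u)).fun_sub
        (hasDerivAt_sinh u)).hasDerivWithinAt.congr_deriv ?_
      ring
    · rw [interior_Ici] at hu
      exact mul_nonneg hu.le (sinh_nonneg_iff.2 hu.le)
  simpa using hmono self_mem_Ici hu hu

noncomputable def sechTanh (t : ℝ) : ℝ := sinh t / cosh t ^ 2

noncomputable def sechTanhLogDeriv (t : ℝ) : ℝ := (1 - sinh t ^ 2) / (sinh t * cosh t)

lemma sechTanh_pos {t : ℝ} (ht : 0 < t) : 0 < sechTanh t :=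
  div_pos (sinh_pos_iff.2 ht) (pow_pos (cosh_pos t) 2)

lemma hasDerivAt_sech (t : ℝ) : HasDerivAt sech (-sechTanh t) t := by
  have hsech : sech = fun t => (cosh t)⁻¹ := funext fun t => one_div _
  rw [hsech, sechTanh, ← neg_div]
  exact (hasDerivAt_cosh t).inv (cosh_pos t).ne'

lemma hasDerivAt_sechTanh {t : ℝ} (ht : t ≠ 0) :
    HasDerivAt sechTanh (sechTanh t * sechTanhLogDeriv t) t := by
  have hs : sinh t ≠ 0 := sinh_ne_zero.2 ht
  have hc : cosh t ≠ 0 := (cosh_pos t).ne'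
  refine ((hasDerivAt_sinh t).fun_div ((hasDerivAt_cosh t).fun_pow 2)
    (pow_ne_zero 2 hc)).congr_deriv ?_
  unfold sechTanh sechTanhLogDeriv
  field_simp
  norm_num
  linear_combination cosh t * cosh_sq t

lemma antitoneOn_mul_sechTanhLogDeriv :
    AntitoneOn (fun s => s * sechTanhLogDeriv s) (Ioi 0) := by
  refine antitoneOn_of_hasDerivAt_nonpos (convex_Ioi 0) isOpen_Ioi
    (f' := fun s => (sinh s * cosh s * (1 - sinh s ^ 2) - s * (1 + 3 * sinh s ^ 2)) /
      (sinh s * cosh s) ^ 2) (fun s hs => ?_) (fun s hs => ?_)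
  · have hsinh : sinh s ≠ 0 := (sinh_pos_iff.2 hs).ne'
    have hcosh : cosh s ≠ 0 := (cosh_pos s).ne'
    refine ((hasDerivAt_id' s).fun_mul (((hasDerivAt_sinh s).fun_pow 2).const_sub 1 |>.fun_div
      ((hasDerivAt_sinh s).fun_mul (hasDerivAt_cosh s)) (mul_ne_zero hsinh hcosh))).congr_deriv ?_
    field_simp
    norm_num
    linear_combination s * (-(sinh s ^ 2) - 1) * cosh_sq s
  · have hs : 0 < s := hs
    have hsc := sinh_le_mul_cosh hs.le
    have hsp := sinh_pos_iff.2 hs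
    have hc := cosh_pos s
    refine div_nonpos_of_nonpos_of_nonneg ?_ (sq_nonneg _)
    -- for `sinh s ≤ 1` use `sinh s ≤ s cosh s`; otherwise the first term is already negative
    rcases le_or_gt (sinh s) 1 with h1 | h1
    · have h2 : 0 ≤ cosh s * (1 - sinh s ^ 2) := mul_nonneg hc.le (by nlinarith)
      nlinarith [mul_le_mul_of_nonneg_right hsc h2, cosh_sq s,
        mul_nonneg hs.le (sq_nonneg (sinh s ^ 2))]
    · nlinarith [mul_pos (mul_pos hsp hc) (by nlinarith : 0 < sinh s ^ 2 - 1),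
        mul_nonneg hs.le (sq_nonneg (sinh s))]

lemma antitoneOn_mul_sechTanh_mul_div_sechTanh {c : ℝ} (hc : 1 ≤ c) :
    AntitoneOn (fun t => c * sechTanh (c * t) / sechTanh t) (Ioi 0) := by
  refine antitoneOn_of_hasDerivAt_nonpos (convex_Ioi 0) isOpen_Ioi
    (f' := fun t => c * sechTanh (c * t) / sechTanh t *
      (c * sechTanhLogDeriv (c * t) - sechTanhLogDeriv t)) (fun t ht => ?_) (fun t ht => ?_)
  · have ht : (0 : ℝ) < t := ht
    have hct : 0 < c * t := by positivity
    have hQ := sechTanh_pos ht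
    have hscaled : HasDerivAt (fun t => sechTanh (c * t)) (sechTanh (c * t) *
        sechTanhLogDeriv (c * t) * c) t :=
      (hasDerivAt_sechTanh hct.ne').comp t (by simpa using (hasDerivAt_id t).const_mul c)
    refine ((hscaled.const_mul c).div (hasDerivAt_sechTanh ht.ne') hQ.ne').congr_deriv ?_
    field_simp
  · have ht : (0 : ℝ) < t := ht
    have hct : 0 < c * t := by positivity
    have hR : c * sechTanhLogDeriv (c * t) ≤ sechTanhLogDeriv t := by
      refine le_of_mul_le_mul_left ?_ ht
      have := antitoneOn_mul_sechTanhLogDeriv ht hct (le_mul_of_one_le_left ht.le hc)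
      linarith
    have hQ := sechTanh_pos ht
    have hQc := sechTanh_pos hct
    exact mul_nonpos_of_nonneg_of_nonpos (by positivity) (sub_nonpos.2 hR)

lemma arcsech_eq_arcosh (x : ℝ) : arcsech x = Real.arcosh x⁻¹ := by
  rw [arcsech, one_div]; rfl

lemma arcsech_pos {x : ℝ} (hx : x ∈ Ioo 0 1) : 0 < arcsech x := by
  rw [arcsech_eq_arcosh]
  exact arcosh_pos (one_lt_inv₀ hx.1 |>.2 hx.2)

lemma antitoneOn_arcsech : AntitoneOn arcsech (Ioi 0) := fun x hx y hy hxy => by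
  rw [arcsech_eq_arcosh, arcsech_eq_arcosh, arcosh_le_arcosh (inv_pos.2 hy) (inv_pos.2 hx)]
  exact inv_anti₀ hx hxy

lemma hasDerivAt_arcsech {x : ℝ} (hx : x ∈ Ioo 0 1) :
    HasDerivAt arcsech (-1 / sechTanh (arcsech x)) x := by
  have hinv : 1 < x⁻¹ := one_lt_inv₀ hx.1 |>.2 hx.2
  have harcsech : arcsech = fun x => Real.arcosh x⁻¹ := funext arcsech_eq_arcosh
  rw [harcsech]
  refine ((hasDerivAt_arcosh hinv).comp x (hasDerivAt_inv hx.1.ne')).congr_deriv ?_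
  have hs : 0 < √(x⁻¹ ^ 2 - 1) := sqrt_pos.2 (by nlinarith)
  rw [sechTanh, sinh_arcosh hinv.le, cosh_arcosh hinv.le]
  field_simp

lemma hasDerivAt_sech_mul_arcsech (c : ℝ) {x : ℝ} (hx : x ∈ Ioo 0 1) :
    HasDerivAt (fun x => sech (c * arcsech x))
      (c * sechTanh (c * arcsech x) / sechTanh (arcsech x)) x :=
  ((hasDerivAt_sech _).comp x ((hasDerivAt_arcsech hx).const_mul c)).congr_deriv (by ring)

lemma strictMonoOn_sech_mul_arcsech {c : ℝ} (hc : 0 < c) :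
    StrictMonoOn (fun x => sech (c * arcsech x)) (Ioo 0 1) := by
  refine strictMonoOn_of_hasDerivWithinAt_pos (convex_Ioo 0 1)
    (fun x hx => (hasDerivAt_sech_mul_arcsech c hx).continuousAt.continuousWithinAt)
    (fun x hx => (hasDerivAt_sech_mul_arcsech c (interior_subset hx)).hasDerivWithinAt)
    (fun x hx => ?_)
  have ht := arcsech_pos (interior_subset hx)
  have := sechTanh_pos (mul_pos hc ht)
  have := sechTanh_pos ht
  positivity

lemma convexOn_sech_mul_arcsech {c : ℝ} (hc : 1 ≤ c) :
    ConvexOn ℝ (Ioo 0 1) (fun x => sech (c * arcsech x)) := by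
  refine MonotoneOn.convexOn_of_deriv (convex_Ioo 0 1)
    (fun x hx => (hasDerivAt_sech_mul_arcsech c hx).continuousAt.continuousWithinAt)
    (fun x hx =>
      (hasDerivAt_sech_mul_arcsech c (interior_subset hx)).differentiableAt.differentiableWithinAt)
    ?_
  rw [interior_Ioo]
  intro x hx y hy hxy
  rw [(hasDerivAt_sech_mul_arcsech c hx).deriv, (hasDerivAt_sech_mul_arcsech c hy).deriv]
  exact antitoneOn_mul_sechTanh_mul_div_sechTanh hc (arcsech_pos hy) (arcsech_pos hx)
    (antitoneOn_arcsech hx.1 hy.1 hxy)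

theorem grover_step_monotone_convex_general (L : ℕ) :
    StrictMonoOn (fun x : ℝ => sech ((2 * L + 1 : ℝ) * arcsech x)) (Set.Ioo (0 : ℝ) 1) ∧
      ConvexOn ℝ (Set.Ioo (0 : ℝ) 1) (fun x : ℝ => sech ((2 * L + 1 : ℝ) * arcsech x)) :=
  ⟨strictMonoOn_sech_mul_arcsech (by positivity),
    convexOn_sech_mul_arcsech (le_add_of_nonneg_left (by positivity))⟩

/-- The function `h(x) = sech ((2L+1) * arcsech x)` is monotonically increasing and
convex on the interval `(0,1)`. -/
theorem grover_step_monotone_convex (L : ℕ) (hL : 0 < L) :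
    StrictMonoOn (fun x : ℝ => sech ((2 * L + 1 : ℝ) * arcsech x)) (Set.Ioo (0 : ℝ) 1) ∧
      ConvexOn ℝ (Set.Ioo (0 : ℝ) 1) (fun x : ℝ => sech ((2 * L + 1 : ℝ) * arcsech x)) :=
  grover_step_monotone_convex_general L
end

section
/- Let λ_1, ..., λ_d ≥ 0 with Σ_i λ_i = 1 and λ_1 = 1 - x for a mixedness parameter x ∈ [0,1). Define x' = 1 - (λ_1 + λ_1²)/(1 + Σ_i λ_i²). Then x'/x ≤ (1+x)/(2 - 2x + x²); in particular x' ≤ x/2 + O(x²) as x → 0. -/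
/-! Write `x = 1 - λ₀` and `S = Σ λᵢ²`. Since the remaining weights are nonnegative and sum to `x`,
`(1 - x)² ≤ S ≤ (1 - x)² + x²`. The new mixedness `1 - (λ₀ + λ₀²)/(1 + S)` is increasing in `S`,
so it is at most its value at either end of this interval; with `2 - 3x` the numerator of
`1 - (x + x²)/(2 - 2x + x²)`, the upper end settles the case `x ≤ 2/3` and the lower end the
case `x ≥ 2/3`, giving `x' ≤ x(1 + x)/(2 - 2x + x²)`. -/

open Finset

theorem two_sub_two_mul_add_sq_pos (x : ℝ) : 0 < 2 - 2 * x + x ^ 2 := by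
  nlinarith [sq_nonneg (1 - x)]

theorem sum_sq_le_sq_add_one_sub_sq {ι : Type*} [Fintype ι] [DecidableEq ι] {p : ι → ℝ}
    (hp : ∀ i, 0 ≤ p i) (hsum : ∑ i, p i = 1) (i₀ : ι) :
    ∑ i, p i ^ 2 ≤ p i₀ ^ 2 + (1 - p i₀) ^ 2 := by
  have hrest : ∑ i ∈ univ.erase i₀, p i = 1 - p i₀ := by
    rw [← hsum, ← add_sum_erase _ _ (mem_univ i₀), add_sub_cancel_left]
  rw [← add_sum_erase _ _ (mem_univ i₀), ← hrest]
  gcongr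
  exact sum_sq_le_sq_sum_of_nonneg fun i _ => hp i

theorem one_sub_div_le_of_sum_sq_bounds {x S : ℝ} (hx : 0 ≤ x)
    (hS_lb : (1 - x) ^ 2 ≤ S) (hS_ub : S ≤ (1 - x) ^ 2 + x ^ 2) :
    1 - ((1 - x) + (1 - x) ^ 2) / (1 + S) ≤ (x + x ^ 2) / (2 - 2 * x + x ^ 2) := by
  have hD := two_sub_two_mul_add_sq_pos x
  have hS : 0 < 1 + S := by nlinarith [sq_nonneg (1 - x)]
  rw [sub_le_comm, one_sub_div hD.ne', div_le_div_iff₀ hD hS]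
  rcases le_total x (2 / 3) with hsmall | hlarge
  · nlinarith [mul_le_mul_of_nonneg_left hS_ub (by linarith : (0 : ℝ) ≤ 2 - 3 * x)]
  · nlinarith [mul_le_mul_of_nonneg_left hS_lb (by linarith : (0 : ℝ) ≤ 3 * x - 2)]

theorem div_two_sub_two_mul_add_sq_le (x : ℝ) :
    (x + x ^ 2) / (2 - 2 * x + x ^ 2) ≤ x / 2 + 2 * x ^ 2 := by
  have hD := two_sub_two_mul_add_sq_pos x
  rw [div_le_iff₀ hD]
  -- the difference is `x² (2 - 7x/2 + 2x²)`, and that quadratic has negative discriminant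
  nlinarith [mul_nonneg (sq_nonneg x) (sq_nonneg (x - 7 / 8))]

theorem mixedness_reduction_rate_general {d : ℕ} (hd : 0 < d)
    (lam : Fin d → ℝ) (x : ℝ)
    (hnonneg : ∀ i, 0 ≤ lam i)
    (hsum : ∑ i, lam i = 1)
    (hlam0 : lam ⟨0, hd⟩ = 1 - x)
    (x' : ℝ)
    (hx' : x' = 1 - (lam ⟨0, hd⟩ + lam ⟨0, hd⟩ ^ 2) / (1 + ∑ i, lam i ^ 2)) :
    x' / x ≤ (1 + x) / (2 - 2 * x + x ^ 2) ∧ x' ≤ x / 2 + 2 * x ^ 2 := by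
  have hx : 0 ≤ x := by
    have := hsum ▸ single_le_sum (fun i _ => hnonneg i) (mem_univ (⟨0, hd⟩ : Fin d))
    linarith
  have hS_lb := single_le_sum (fun i _ => sq_nonneg (lam i)) (mem_univ (⟨0, hd⟩ : Fin d))
  have hS_ub := sum_sq_le_sq_add_one_sub_sq hnonneg hsum ⟨0, hd⟩
  rw [hlam0] at hS_lb hS_ub
  rw [sub_sub_cancel] at hS_ub
  have hx'_le : x' ≤ (x + x ^ 2) / (2 - 2 * x + x ^ 2) := by
    rw [hx', hlam0]
    exact one_sub_div_le_of_sum_sq_bounds hx hS_lb hS_ub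
  refine ⟨?_, hx'_le.trans (div_two_sub_two_mul_add_sq_le x)⟩
  refine div_le_of_le_mul₀ hx (div_nonneg (by linarith) (two_sub_two_mul_add_sq_pos x).le) ?_
  rwa [div_mul_eq_mul_div, mul_comm, mul_add, mul_one, ← sq]

/-- Mixedness reduction rate of one interferential mixedness reduction round:
for a probability vector `λ` with largest entry `λ_0 = 1 - x`, `x ∈ [0,1)`, the new
mixedness `x' = 1 - (λ_0 + λ_0²)/(1 + Σ_i λ_i²)` satisfies
`x'/x ≤ (1+x)/(2-2x+x²)`; in particular `x' ≤ x/2 + O(x²)` (concretely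
`x' ≤ x/2 + 2x²`). -/
theorem mixedness_reduction_rate {d : ℕ} (hd : 0 < d)
    (lam : Fin d → ℝ) (x : ℝ)
    (hnonneg : ∀ i, 0 ≤ lam i)
    (hsum : ∑ i, lam i = 1)
    (hmax : ∀ i, lam i ≤ lam ⟨0, hd⟩)
    (hx : x ∈ Set.Ico (0 : ℝ) 1)
    (hlam0 : lam ⟨0, hd⟩ = 1 - x)
    (x' : ℝ)
    (hx' : x' = 1 - (lam ⟨0, hd⟩ + lam ⟨0, hd⟩ ^ 2) / (1 + ∑ i, lam i ^ 2)) :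
    x' / x ≤ (1 + x) / (2 - 2 * x + x ^ 2) ∧ x' ≤ x / 2 + 2 * x ^ 2 :=
  mixedness_reduction_rate_general hd lam x hnonneg hsum hlam0 x' hx'
end

section
/- Let x ∈ (0, 1/3] and let y_0 = x, y_j ≤ y_{j-1}·(1 + y_{j-1})/(2 - 2y_{j-1} + y_{j-1}²) for j ≥ 1. Then for any g > 1 there exists R = O(log g) such that y_R ≤ x/g; in particular since the factor (1+y)/(2-2y+y²) is monotone increasing in y on (0,1/3], y_R/y_0 ≤ ((1+x)/(2-2x+x²))^R, and (1+x)/(2-2x+x²) < 1 for x ∈ (0,1/3]. -/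
/-!
The factor `f(t) = (1 + t) / (2 - 2t + t²)` satisfies
`(1 + b)(2 - 2a + a²) - (1 + a)(2 - 2b + b²) = (b - a)(4 - a - b - ab)`, so it is strictly
increasing on `[-1, 1]`, and `f(t) < 1` amounts to `t² - 3t + 1 > 0`, which holds for `t ≤ 1/3`.
Since the mixedness never increases, monotonicity bounds every round's factor by `c = f(x) < 1`,
whence `y_R ≤ x cᴿ`, and `cᴿ ≤ 1/g` as soon as `R ≥ log g / log (1/c)`.
-/

open Real

noncomputable def reductionFactor (t : ℝ) : ℝ := (1 + t) / (2 - 2 * t + t ^ 2)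

lemma reductionFactor_denom_pos (t : ℝ) : 0 < 2 - 2 * t + t ^ 2 := by
  nlinarith [sq_nonneg (t - 1)]

lemma reductionFactor_pos {t : ℝ} (ht : -1 < t) : 0 < reductionFactor t :=
  div_pos (by linarith) (reductionFactor_denom_pos t)

lemma reductionFactor_lt_one {t : ℝ} (ht : t ≤ 1 / 3) : reductionFactor t < 1 := by
  rw [reductionFactor, div_lt_one (reductionFactor_denom_pos t)]
  nlinarith

lemma reductionFactor_strictMonoOn : StrictMonoOn reductionFactor (Set.Icc (-1) 1) := by
  intro a ⟨ha₁, ha₂⟩ b ⟨hb₁, hb₂⟩ hab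
  rw [reductionFactor, reductionFactor,
    div_lt_div_iff₀ (reductionFactor_denom_pos a) (reductionFactor_denom_pos b)]
  have hgap : 0 < 4 - a - b - a * b := by
    nlinarith [mul_nonneg (sub_nonneg.2 ha₂) (sub_nonneg.2 hb₂)]
  nlinarith [mul_pos (sub_pos.2 hab) hgap]

lemma le_mul_pow_of_le_mul_apply {φ : ℝ → ℝ} {x : ℝ} {y : ℕ → ℝ}
    (hφ : MonotoneOn φ (Set.Icc 0 x)) (hφx₀ : 0 ≤ φ x) (hφx₁ : φ x ≤ 1)
    (hy0 : y 0 ≤ x) (hynn : ∀ j, 0 ≤ y j) (hrec : ∀ j, y (j + 1) ≤ y j * φ (y j)) :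
    ∀ n, y n ≤ x * φ x ^ n := by
  have hx : 0 ≤ x := (hynn 0).trans hy0
  intro n
  induction n with
  | zero => simpa using hy0
  | succ n ih =>
    have hyn_le : y n ≤ x := ih.trans (mul_le_of_le_one_right hx (pow_le_one₀ hφx₀ hφx₁))
    have hstep : φ (y n) ≤ φ x := hφ ⟨hynn n, hyn_le⟩ ⟨hx, le_rfl⟩ hyn_le
    calc y (n + 1) ≤ y n * φ (y n) := hrec n
      _ ≤ y n * φ x := mul_le_mul_of_nonneg_left hstep (hynn n)
      _ ≤ x * φ x ^ n * φ x := mul_le_mul_of_nonneg_right ih hφx₀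
      _ = x * φ x ^ (n + 1) := by ring

lemma exists_log_bounded_pow_le_inv {c : ℝ} (hc₀ : 0 < c) (hc₁ : c < 1) :
    ∃ C : ℝ, 0 < C ∧ ∀ g : ℝ, 1 < g → ∃ R : ℕ, (R : ℝ) ≤ C * (log g + 1) ∧ c ^ R ≤ g⁻¹ := by
  set L := -log c
  have hL : 0 < L := neg_pos.2 (log_neg hc₀ hc₁)
  refine ⟨max L⁻¹ 1, lt_max_of_lt_right one_pos, fun g hg => ⟨⌈log g / L⌉₊, ?_, ?_⟩⟩
  · have hlog : 0 ≤ log g := (log_pos hg).le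
    calc (⌈log g / L⌉₊ : ℝ) ≤ L⁻¹ * log g + 1 := by
          rw [← div_eq_inv_mul]; exact (Nat.ceil_lt_add_one (div_nonneg hlog hL.le)).le
      _ ≤ max L⁻¹ 1 * log g + max L⁻¹ 1 * 1 := by
          gcongr
          · exact le_max_left _ _
          · rw [mul_one]; exact le_max_right _ _
      _ = max L⁻¹ 1 * (log g + 1) := by ring
  · have hR : log g ≤ ⌈log g / L⌉₊ * L := (div_le_iff₀ hL).1 (Nat.le_ceil _)
    rw [← log_le_log_iff (by positivity) (by positivity), log_pow, log_inv]
    linarith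

/-- Iterated mixedness reduction: if `y_0 = x ∈ (0, 1/3]` and each round satisfies
`y_{j+1} ≤ y_j (1+y_j)/(2-2y_j+y_j²)`, then (since the factor is monotone increasing
in `y` on `(0,1/3]` and `(1+x)/(2-2x+x²) < 1` there) `y_R ≤ x ((1+x)/(2-2x+x²))^R`
for every `R`, and for every `g > 1` there is `R = O(log g)` with `y_R ≤ x / g`. -/
theorem iterated_mixedness_reduction (x : ℝ) (y : ℕ → ℝ)
    (hx : x ∈ Set.Ioc (0 : ℝ) (1 / 3))
    (hy0 : y 0 = x)
    (hynn : ∀ j, 0 ≤ y j)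
    (hrec : ∀ j : ℕ, y (j + 1) ≤ y j * (1 + y j) / (2 - 2 * y j + y j ^ 2)) :
    (StrictMonoOn (fun t : ℝ => (1 + t) / (2 - 2 * t + t ^ 2)) (Set.Ioc (0 : ℝ) (1 / 3))) ∧
    (1 + x) / (2 - 2 * x + x ^ 2) < 1 ∧
    (∀ R : ℕ, y R ≤ x * ((1 + x) / (2 - 2 * x + x ^ 2)) ^ R) ∧
    (∃ C : ℝ, 0 < C ∧ ∀ g : ℝ, 1 < g →
      ∃ R : ℕ, (R : ℝ) ≤ C * (Real.log g + 1) ∧ y R ≤ x / g) := by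
  obtain ⟨hx₀, hx₁⟩ := hx
  have hc₀ : 0 < reductionFactor x := reductionFactor_pos (by linarith)
  have hc₁ : reductionFactor x < 1 := reductionFactor_lt_one hx₁
  have hdecay : ∀ R, y R ≤ x * reductionFactor x ^ R :=
    le_mul_pow_of_le_mul_apply
      (reductionFactor_strictMonoOn.monotoneOn.mono
        (Set.Icc_subset_Icc (by norm_num) (by linarith)))
      hc₀.le hc₁.le hy0.le hynn (fun j => (hrec j).trans_eq (mul_div_assoc _ _ _))
  have hIoc : Set.Ioc (0 : ℝ) (1 / 3) ⊆ Set.Icc (-1) 1 :=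
    Set.Ioc_subset_Icc_self.trans (Set.Icc_subset_Icc (by norm_num) (by norm_num))
  refine ⟨reductionFactor_strictMonoOn.mono hIoc, hc₁, hdecay, ?_⟩
  obtain ⟨C, hC, hlog⟩ := exists_log_bounded_pow_le_inv hc₀ hc₁
  refine ⟨C, hC, fun g hg => ?_⟩
  obtain ⟨R, hR, hcR⟩ := hlog g hg
  refine ⟨R, hR, (hdecay R).trans ?_⟩
  rw [div_eq_mul_inv]
  gcongr
end

section
/- For density matrices ρ, σ on ℂ^d, the density matrix exponentiation channel satisfies Tr_1[e^{-iŜs}(ρ ⊗ σ)e^{iŜs}] = cos²(s)·σ - i·sin(s)cos(s)·[ρ,σ] + sin²(s)·ρ, where Ŝ is the swap operator on ℂ^d ⊗ ℂ^d. -/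
open Matrix ComplexOrder

/-- Partial trace over the first tensor factor of a matrix on `ℂ^d ⊗ ℂ^d`. -/
noncomputable def ptrace1 {d : ℕ} (M : Matrix (Fin d × Fin d) (Fin d × Fin d) ℂ) :
    Matrix (Fin d) (Fin d) ℂ :=
  fun a b => ∑ k : Fin d, M (k, a) (k, b)

/-- Kronecker product `ρ ⊗ σ` of two `d × d` matrices, on `ℂ^d ⊗ ℂ^d`. -/
noncomputable def tensor2 {d : ℕ} (ρ σ : Matrix (Fin d) (Fin d) ℂ) :
    Matrix (Fin d × Fin d) (Fin d × Fin d) ℂ :=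
  fun p q => ρ p.1 q.1 * σ p.2 q.2

/-- The swap operator `Ŝ` on `ℂ^d ⊗ ℂ^d`, `Ŝ(|j⟩⊗|k⟩) = |k⟩⊗|j⟩`. -/
noncomputable def swapOp (d : ℕ) : Matrix (Fin d × Fin d) (Fin d × Fin d) ℂ :=
  fun p q => if p.1 = q.2 ∧ p.2 = q.1 then 1 else 0

/-! Since `Ŝ² = 1`, `e^{± i Ŝ s} = cos s ± i sin s · Ŝ`, so the conjugated state is a combination
of `ρ ⊗ σ`, `Ŝ (ρ ⊗ σ)`, `(ρ ⊗ σ) Ŝ` and `Ŝ (ρ ⊗ σ) Ŝ = σ ⊗ ρ`, whose partial traces over the first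
factor are `(tr ρ) σ`, `ρ σ`, `σ ρ` and `(tr σ) ρ`; the identity `i² = -1` turns the last
coefficient into `sin² s`. -/

open NormedSpace Complex

theorem exp_smul_of_mul_self_eq_one {A : Type*} [NormedRing A] [NormedAlgebra ℂ A]
    [CompleteSpace A] {S : A} (hS : S * S = 1) (c : ℂ) :
    exp (c • S) = cosh c • (1 : A) + sinh c • S := by
  have hpow_even (k : ℕ) : S ^ (2 * k) = 1 := by rw [pow_mul, sq, hS, one_pow]
  have hpow_odd (k : ℕ) : S ^ (2 * k + 1) = S := by rw [pow_succ, hpow_even, one_mul]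
  have hterm (n : ℕ) : ((n.factorial : ℂ))⁻¹ • (c • S) ^ n = (c ^ n / n.factorial) • S ^ n := by
    rw [smul_pow, smul_smul, div_eq_mul_inv, mul_comm]
  refine (exp_series_hasSum_exp' (𝕂 := ℂ) (c • S)).unique (HasSum.even_add_odd ?_ ?_)
  · convert (hasSum_cosh c).smul_const (1 : A) using 2 with k
    rw [hterm, hpow_even]
  · convert (hasSum_sinh c).smul_const S using 2 with k
    rw [hterm, hpow_odd]

theorem exp_I_mul_smul_of_mul_self_eq_one {A : Type*} [NormedRing A] [NormedAlgebra ℂ A]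
    [CompleteSpace A] {S : A} (hS : S * S = 1) (t : ℝ) :
    exp ((I * t) • S) = (Real.cos t : ℂ) • (1 : A) + (I * Real.sin t) • S := by
  rw [exp_smul_of_mul_self_eq_one hS, mul_comm, cosh_mul_I, sinh_mul_I, ofReal_cos, ofReal_sin,
    mul_comm]

theorem swapOp_eq_toMatrix (d : ℕ) :
    swapOp d = (Equiv.prodComm (Fin d) (Fin d)).toPEquiv.toMatrix := by
  ext p q
  simp [swapOp, Prod.ext_iff, eq_comm, and_comm]

theorem swapOp_mul_apply {d : ℕ} (M : Matrix (Fin d × Fin d) (Fin d × Fin d) ℂ) (p q) :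
    (swapOp d * M) p q = M p.swap q := by
  simp [swapOp_eq_toMatrix, PEquiv.toMatrix_toPEquiv_mul]

theorem mul_swapOp_apply {d : ℕ} (M : Matrix (Fin d × Fin d) (Fin d × Fin d) ℂ) (p q) :
    (M * swapOp d) p q = M p q.swap := by
  simp [swapOp_eq_toMatrix, PEquiv.mul_toMatrix_toPEquiv]

theorem swapOp_mul_self (d : ℕ) : swapOp d * swapOp d = 1 := by
  ext p q
  simp [swapOp_mul_apply, swapOp, Matrix.one_apply, Prod.ext_iff, and_comm]

theorem ptrace1_add {d : ℕ} (M N : Matrix (Fin d × Fin d) (Fin d × Fin d) ℂ) :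
    ptrace1 (M + N) = ptrace1 M + ptrace1 N := by
  ext a b
  simp [ptrace1, Finset.sum_add_distrib]

theorem ptrace1_smul {d : ℕ} (c : ℂ) (M : Matrix (Fin d × Fin d) (Fin d × Fin d) ℂ) :
    ptrace1 (c • M) = c • ptrace1 M := by
  ext a b
  simp [ptrace1, Finset.mul_sum]

section tensor2

variable {d : ℕ} (ρ σ : Matrix (Fin d) (Fin d) ℂ)

theorem ptrace1_tensor2 : ptrace1 (tensor2 ρ σ) = ρ.trace • σ := by
  ext a b
  simp [ptrace1, tensor2, Matrix.trace, Finset.sum_mul]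

theorem ptrace1_swapOp_mul_tensor2 : ptrace1 (swapOp d * tensor2 ρ σ) = ρ * σ := by
  ext a b
  simp only [ptrace1, swapOp_mul_apply]
  simp [tensor2, Matrix.mul_apply]

theorem ptrace1_tensor2_mul_swapOp : ptrace1 (tensor2 ρ σ * swapOp d) = σ * ρ := by
  ext a b
  simp only [ptrace1, mul_swapOp_apply]
  simp [tensor2, Matrix.mul_apply, mul_comm]

theorem ptrace1_swapOp_mul_tensor2_mul_swapOp :
    ptrace1 (swapOp d * tensor2 ρ σ * swapOp d) = σ.trace • ρ := by
  ext a b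
  simp only [ptrace1, mul_swapOp_apply, swapOp_mul_apply, tensor2, Matrix.trace, Prod.swap,
    Matrix.smul_apply, smul_eq_mul, ← Finset.mul_sum]
  exact mul_comm _ _

end tensor2

theorem exp_I_mul_smul_swapOp (d : ℕ) (t : ℝ) :
    exp ((I * t) • swapOp d) = (Real.cos t : ℂ) • 1 + (I * Real.sin t) • swapOp d :=
  open scoped Norms.Operator in exp_I_mul_smul_of_mul_self_eq_one (swapOp_mul_self d) t

theorem dme_explicit_form_general {d : ℕ} (s : ℝ)
    (ρ σ : Matrix (Fin d) (Fin d) ℂ)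
    (hρtr : ρ.trace = 1)
    (hσtr : σ.trace = 1) :
    ptrace1 (NormedSpace.exp (-(Complex.I * s) • swapOp d) * tensor2 ρ σ *
        NormedSpace.exp ((Complex.I * s) • swapOp d))
      = ((Real.cos s ^ 2 : ℝ) : ℂ) • σ
        - (Complex.I * Real.sin s * Real.cos s) • (ρ * σ - σ * ρ)
        + ((Real.sin s ^ 2 : ℝ) : ℂ) • ρ := by
  have hneg : -(I * s) = I * ((-s : ℝ) : ℂ) := by push_cast; ring
  rw [hneg, exp_I_mul_smul_swapOp, exp_I_mul_smul_swapOp, Real.cos_neg, Real.sin_neg]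
  set S := swapOp d
  set T := tensor2 ρ σ
  have hexpand (a b a' b' : ℂ) : (a • 1 + b • S) * T * (a' • 1 + b' • S)
      = (a * a') • T + (a * b') • (T * S) + (b * a') • (S * T) + (b * b') • (S * T * S) := by
    simp only [add_mul, mul_add, smul_mul_assoc, mul_smul_comm, one_mul, mul_one]
    module
  rw [hexpand]
  simp only [ptrace1_add, ptrace1_smul, T, S, ptrace1_tensor2, ptrace1_tensor2_mul_swapOp,
    ptrace1_swapOp_mul_tensor2, ptrace1_swapOp_mul_tensor2_mul_swapOp, hρtr, hσtr, one_smul]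
  linear_combination (norm := module) (-Real.sin s ^ 2 : ℂ) • I_mul_I • ρ

/-- Explicit form of the density matrix exponentiation channel:
`Tr_1[e^{-iŜs}(ρ ⊗ σ)e^{iŜs}] = cos²(s)·σ - i·sin(s)cos(s)·[ρ,σ] + sin²(s)·ρ`. -/
theorem dme_explicit_form {d : ℕ} (hd : 0 < d) (s : ℝ)
    (ρ σ : Matrix (Fin d) (Fin d) ℂ)
    (hρ : ρ.PosSemidef) (hρtr : ρ.trace = 1)
    (hσ : σ.PosSemidef) (hσtr : σ.trace = 1) :
    ptrace1 (NormedSpace.exp (-(Complex.I * s) • swapOp d) * tensor2 ρ σ *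
        NormedSpace.exp ((Complex.I * s) • swapOp d))
      = ((Real.cos s ^ 2 : ℝ) : ℂ) • σ
        - (Complex.I * Real.sin s * Real.cos s) • (ρ * σ - σ * ρ)
        + ((Real.sin s ^ 2 : ℝ) : ℂ) • ρ :=
  dme_explicit_form_general s ρ σ hρtr hσtr
end

section
/- Let ψ and φ be pure state density matrices on ℂ^d and let E_s(φ) = cos²(s)φ - i sin(s)cos(s)[ψ,φ] + sin²(s)ψ be the output of density matrix exponentiation with pure instruction ψ. Then the purity satisfies Tr[(E_s(φ))²] = 1 - 2sin²(s)cos²(s)(1 - |⟨ψ|φ⟩|²)², which is strictly less than 1 whenever sin(2s) ≠ 0 and ψ ≠ φ. -/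
/-!
A Hermitian idempotent of trace one has one-dimensional range, so it compresses every matrix
to a scalar multiple of itself: `ψ M ψ = Tr[ψ M] ψ`. With `t = Tr[ψφ]` this reduces every
trace in the expansion of `Tr[E²]` to a polynomial in `t`, and the trace of the square of the
commutator `[ψ, φ]` is `2t² - 2t`; this gives the purity formula. For the strict inequality,
`1 - t = Tr[(ψ - φ)²] / 2` is the squared Frobenius distance of `ψ` and `φ`, a positive real
number when `ψ ≠ φ`.
-/

open Matrix ComplexOrder

theorem IsIdempotentElem.mul_mul_eq_trace_mul_smul {K V : Type*} [Field K] [CharZero K]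
    [AddCommGroup V] [Module K V] [FiniteDimensional K V] {p : Module.End K V}
    (hp : IsIdempotentElem p) (htr : LinearMap.trace K V p = 1) (a : Module.End K V) :
    p * a * p = LinearMap.trace K V (p * a) • p := by
  have hrank : Module.finrank K (LinearMap.range p) = 1 := by
    exact_mod_cast (LinearMap.IsIdempotentElem.isProj_range p hp).trace.symm.trans htr
  obtain ⟨v, -, hv⟩ := finrank_eq_one_iff'.mp hrank
  -- `p * a` maps the line `range p = K ∙ v` into itself, hence acts on it as a scalar `c`.
  obtain ⟨c, hc⟩ := hv ⟨p (a v), LinearMap.mem_range_self _ _⟩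
  have hpap : p * a * p = c • p := by
    ext x
    obtain ⟨μ, hμ⟩ := hv ⟨p x, LinearMap.mem_range_self _ _⟩
    have hx : p x = μ • (v : V) := congrArg Subtype.val hμ.symm
    have hpav : p (a v) = c • (v : V) := congrArg Subtype.val hc.symm
    simp [hx, hpav, smul_comm c μ]
  have htrace : LinearMap.trace K V (p * a) = c := by
    calc LinearMap.trace K V (p * a) = LinearMap.trace K V (p * p * a) := by rw [hp.eq]
      _ = LinearMap.trace K V (p * a * p) := by rw [mul_assoc, LinearMap.trace_mul_comm]
      _ = c := by rw [hpap, map_smul, htr, smul_eq_mul, mul_one]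
  rw [hpap, htrace]

theorem Matrix.mul_mul_eq_trace_mul_smul_of_isIdempotentElem {n K : Type*} [Fintype n]
    [DecidableEq n] [Field K] [CharZero K] {P : Matrix n n K} (hP : IsIdempotentElem P)
    (htr : P.trace = 1) (A : Matrix n n K) : P * A * P = (P * A).trace • P := by
  apply toLinAlgEquiv'.injective
  have := (hP.map toLinAlgEquiv').mul_mul_eq_trace_mul_smul ((trace_toLin'_eq P).trans htr)
    (toLinAlgEquiv' A)
  rw [← map_mul, ← map_mul, show LinearMap.trace K _ (toLinAlgEquiv' (P * A)) = (P * A).trace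
    from trace_toLin'_eq _] at this
  rw [this, map_smul]

section Traces

variable {n R : Type*} [Fintype n] [CommRing R]

theorem Matrix.trace_mul_commutator_left (X Y : Matrix n n R) :
    (X * (X * Y - Y * X)).trace = 0 := by
  rw [Matrix.mul_sub, trace_sub, trace_mul_cycle' X Y X, sub_self]

theorem Matrix.trace_mul_commutator_right (X Y : Matrix n n R) :
    (Y * (X * Y - Y * X)).trace = 0 := by
  rw [Matrix.mul_sub, trace_sub, trace_mul_cycle' Y X Y, sub_self]

variable {ψ φ : Matrix n n R}

theorem Matrix.trace_commutator_mul_self (hψ : IsIdempotentElem ψ) (hφ : IsIdempotentElem φ)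
    (hψtr : ψ.trace = 1) (hφtr : φ.trace = 1)
    (hψφψ : ψ * φ * ψ = (ψ * φ).trace • ψ) (hφψφ : φ * ψ * φ = (ψ * φ).trace • φ) :
    ((ψ * φ - φ * ψ) * (ψ * φ - φ * ψ)).trace = 2 * (ψ * φ).trace ^ 2 - 2 * (ψ * φ).trace := by
  have hψφψφ : ψ * φ * (ψ * φ) = (ψ * φ).trace • (ψ * φ) := by
    rw [← Matrix.mul_assoc, hψφψ, Matrix.smul_mul]
  have hφψφψ : φ * ψ * (φ * ψ) = (ψ * φ).trace • (φ * ψ) := by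
    rw [← Matrix.mul_assoc, hφψφ, Matrix.smul_mul]
  have hψφφψ : ψ * φ * (φ * ψ) = (ψ * φ).trace • ψ := by
    rw [← Matrix.mul_assoc, Matrix.mul_assoc ψ, hφ.eq, hψφψ]
  have hφψψφ : φ * ψ * (ψ * φ) = (ψ * φ).trace • φ := by
    rw [← Matrix.mul_assoc, Matrix.mul_assoc φ, hψ.eq, hφψφ]
  simp only [Matrix.sub_mul, Matrix.mul_sub, trace_sub, hψφψφ, hφψφψ, hψφφψ, hφψψφ, trace_smul,
    smul_eq_mul, trace_mul_comm φ ψ, hψtr, hφtr]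
  ring

theorem Matrix.trace_mul_self_smul_sub_smul_commutator_add_smul (hψ : IsIdempotentElem ψ)
    (hφ : IsIdempotentElem φ) (hψtr : ψ.trace = 1) (hφtr : φ.trace = 1)
    (hψφψ : ψ * φ * ψ = (ψ * φ).trace • ψ) (hφψφ : φ * ψ * φ = (ψ * φ).trace • φ) (a b c : R) :
    ((a • φ - b • (ψ * φ - φ * ψ) + c • ψ) * (a • φ - b • (ψ * φ - φ * ψ) + c • ψ)).trace
      = a ^ 2 + c ^ 2 + 2 * a * c * (ψ * φ).trace
        + 2 * b ^ 2 * ((ψ * φ).trace ^ 2 - (ψ * φ).trace) := by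
  have hK := trace_commutator_mul_self hψ hφ hψtr hφtr hψφψ hφψφ
  have hψK := trace_mul_commutator_left ψ φ
  have hφK := trace_mul_commutator_right ψ φ
  have hKψ : ((ψ * φ - φ * ψ) * ψ).trace = 0 := by rw [trace_mul_comm, hψK]
  have hKφ : ((ψ * φ - φ * ψ) * φ).trace = 0 := by rw [trace_mul_comm, hφK]
  have hφψ : (φ * ψ).trace = (ψ * φ).trace := trace_mul_comm φ ψ
  generalize ψ * φ - φ * ψ = K at hK hψK hφK hKψ hKφ
  simp only [Matrix.add_mul, Matrix.mul_add, Matrix.sub_mul, Matrix.mul_sub, Matrix.smul_mul,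
    Matrix.mul_smul, trace_add, trace_sub, trace_smul, smul_eq_mul, hψ.eq, hφ.eq, hψtr, hφtr,
    hK, hψK, hφK, hKψ, hKφ, hφψ]
  ring

theorem Matrix.trace_sub_mul_sub_of_isIdempotentElem (hψ : IsIdempotentElem ψ)
    (hφ : IsIdempotentElem φ) (hψtr : ψ.trace = 1) (hφtr : φ.trace = 1) :
    ((ψ - φ) * (ψ - φ)).trace = 2 * (1 - (ψ * φ).trace) := by
  simp only [Matrix.sub_mul, Matrix.mul_sub, trace_sub, hψ.eq, hφ.eq, hψtr, hφtr,
    trace_mul_comm φ ψ]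
  ring

end Traces

theorem Matrix.IsHermitian.trace_mul_self_pos {n : Type*} [Fintype n] {A : Matrix n n ℂ}
    (hA : A.IsHermitian) (h : A ≠ 0) : 0 < (A * A).trace := by
  have hpsd := posSemidef_conjTranspose_mul_self A
  have hne := trace_conjTranspose_mul_self_eq_zero_iff.not.mpr h
  rw [hA.eq] at hpsd hne
  exact hpsd.trace_nonneg.lt_of_ne' hne

theorem dme_purity_loss_general {d : ℕ} (s : ℝ)
    (ψ φ : Matrix (Fin d) (Fin d) ℂ)
    (hψh : ψ.IsHermitian) (hψproj : ψ * ψ = ψ) (hψtr : ψ.trace = 1)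
    (hφh : φ.IsHermitian) (hφproj : φ * φ = φ) (hφtr : φ.trace = 1)
    (E : Matrix (Fin d) (Fin d) ℂ)
    (hE : E = ((Real.cos s ^ 2 : ℝ) : ℂ) • φ
        - (Complex.I * Real.sin s * Real.cos s) • (ψ * φ - φ * ψ)
        + ((Real.sin s ^ 2 : ℝ) : ℂ) • ψ) :
    (E * E).trace
        = 1 - 2 * (Real.sin s ^ 2 : ℂ) * (Real.cos s ^ 2 : ℂ)
            * (1 - (ψ * φ).trace) ^ 2 ∧
      (Real.sin (2 * s) ≠ 0 → ψ ≠ φ → ((E * E).trace).re < 1) := by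
  have hψφψ := mul_mul_eq_trace_mul_smul_of_isIdempotentElem hψproj hψtr φ
  have hφψφ : φ * ψ * φ = (ψ * φ).trace • φ := by
    rw [trace_mul_comm]; exact mul_mul_eq_trace_mul_smul_of_isIdempotentElem hφproj hφtr ψ
  have hpurity : (E * E).trace
      = 1 - 2 * (Real.sin s ^ 2 : ℂ) * (Real.cos s ^ 2 : ℂ) * (1 - (ψ * φ).trace) ^ 2 := by
    have hsc : (Real.sin s : ℂ) ^ 2 + (Real.cos s : ℂ) ^ 2 = 1 := by
      exact_mod_cast Real.sin_sq_add_cos_sq s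
    rw [hE, trace_mul_self_smul_sub_smul_commutator_add_smul hψproj hφproj hψtr hφtr hψφψ hφψφ]
    simp only [Complex.ofReal_pow]
    linear_combination ((Real.sin s : ℂ) ^ 2 + (Real.cos s : ℂ) ^ 2 + 1) * hsc
      + 2 * (Real.sin s : ℂ) ^ 2 * (Real.cos s : ℂ) ^ 2 * ((ψ * φ).trace ^ 2 - (ψ * φ).trace)
        * Complex.I_sq
  refine ⟨hpurity, fun hs hne => ?_⟩
  have hgap : 0 < 1 - (ψ * φ).trace := by
    have := (hψh.sub hφh).trace_mul_self_pos (sub_ne_zero.mpr hne)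
    rw [trace_sub_mul_sub_of_isIdempotentElem hψproj hφproj hψtr hφtr] at this
    exact pos_of_mul_pos_right this zero_le_two
  obtain ⟨r, hr, hr_eq⟩ : ∃ r : ℝ, 0 < r ∧ 1 - (ψ * φ).trace = r :=
    ⟨_, (Complex.pos_iff.mp hgap).1, Complex.eq_re_of_ofReal_le hgap.le⟩
  have hsc : 0 < Real.sin s ^ 2 * Real.cos s ^ 2 := by
    rw [← mul_pow]
    exact sq_pos_of_ne_zero fun h => hs (by rw [Real.sin_two_mul, mul_assoc, h, mul_zero])
  rw [hpurity, hr_eq]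
  norm_cast
  linarith [mul_pos hsc (pow_pos hr 2)]

/-- Purity loss of density matrix exponentiation with a pure instruction: for pure
states `ψ, φ` (rank-one projections) and
`E_s(φ) = cos²(s)φ - i sin(s)cos(s)[ψ,φ] + sin²(s)ψ`, the purity is
`Tr[(E_s(φ))²] = 1 - 2 sin²(s) cos²(s) (1 - |⟨ψ|φ⟩|²)²`, which is strictly less
than `1` whenever `sin(2s) ≠ 0` and `ψ ≠ φ`. -/
theorem dme_purity_loss {d : ℕ} (hd : 0 < d) (s : ℝ)
    (ψ φ : Matrix (Fin d) (Fin d) ℂ)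
    (hψh : ψ.IsHermitian) (hψproj : ψ * ψ = ψ) (hψtr : ψ.trace = 1)
    (hφh : φ.IsHermitian) (hφproj : φ * φ = φ) (hφtr : φ.trace = 1)
    (E : Matrix (Fin d) (Fin d) ℂ)
    (hE : E = ((Real.cos s ^ 2 : ℝ) : ℂ) • φ
        - (Complex.I * Real.sin s * Real.cos s) • (ψ * φ - φ * ψ)
        + ((Real.sin s ^ 2 : ℝ) : ℂ) • ψ) :
    (E * E).trace
        = 1 - 2 * (Real.sin s ^ 2 : ℂ) * (Real.cos s ^ 2 : ℂ)
            * (1 - (ψ * φ).trace) ^ 2 ∧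
      (Real.sin (2 * s) ≠ 0 → ψ ≠ φ → ((E * E).trace).re < 1) :=
  dme_purity_loss_general s ψ φ hψh hψproj hψtr hφh hφproj hφtr E hE
end

section
/- Let ρ and σ be states on a 2-dimensional Hilbert space with eigenbasis {|0⟩,|1⟩} for ρ, where ψ = |0⟩⟨0|, ρ = (1-x)|0⟩⟨0| + x|1⟩⟨1| with x ∈ [0, ε], ε < 1/2, and let E_α^χ(σ) = e^{-iαχ}σe^{iαχ} denote the partial-rotation channel generated by χ. Then for any state σ (with off-diagonal entry q, |q| ≤ 1/2), the trace distance satisfies (1/2)‖E_α^ψ(σ) - E_α^ρ(σ)‖₁ = 2|q|·|sin(αx)|, so maximizing over σ gives (1/2)‖E_α^ψ - E_α^ρ‖_Tr = |sin(αx)| ≤ π·ε for α ∈ [-π, π]. -/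
/-!
Both generators are diagonal with real spectrum, so each channel multiplies the entry `σ i j` by
the phase `exp (i α (d j - d i))`. The difference of the two outputs therefore has zero diagonal
and off-diagonal entries of modulus `‖exp (-iα) - exp (iα (2x - 1))‖ · |q| = 2 |sin (α x)| · |q|`.
For a `2 × 2` matrix `D` of this shape `Dᴴ * D` is scalar, so both singular values equal
`2 |sin (α x)| · |q|`. Positivity with unit trace gives `|q|² ≤ σ₀₀ σ₁₁ ≤ 1/4`, with equality for
`|+⟩⟨+|`, and `|sin (α x)| ≤ |α| x ≤ π ε`.
-/

open Matrix ComplexOrder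

/-- Trace norm of a complex matrix: the sum of its singular values. -/
noncomputable def traceNorm {n : Type*} [Fintype n] [DecidableEq n]
    (A : Matrix n n ℂ) : ℝ :=
  ∑ i, Real.sqrt ((Matrix.posSemidef_conjTranspose_mul_self A).1.eigenvalues i)

/-- The partial-rotation channel `E_α^χ(σ) = e^{-iαχ} σ e^{iαχ}` generated by `χ`. -/
noncomputable def rotChan {n : Type*} [Fintype n] [DecidableEq n]
    (α : ℝ) (χ σ : Matrix n n ℂ) : Matrix n n ℂ :=
  NormedSpace.exp (-(Complex.I * α) • χ) * σ * NormedSpace.exp ((Complex.I * α) • χ)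

lemma Matrix.IsHermitian.eigenvalues_eq_of_eq_smul_one {𝕜 n : Type*} [RCLike 𝕜] [Fintype n]
    [DecidableEq n] {A : Matrix n n 𝕜} (hA : A.IsHermitian) {r : ℝ} (h : A = (r : 𝕜) • 1)
    (i : n) : hA.eigenvalues i = r := by
  have : Nonempty n := ⟨i⟩
  have hspec : spectrum ℝ A = {r} := by
    rw [h, ← RCLike.real_smul_eq_coe_smul (K := 𝕜), ← Algebra.algebraMap_eq_smul_one,
      spectrum.scalar_eq]
  simpa [hspec] using hA.eigenvalues_mem_spectrum_real i

lemma traceNorm_eq_of_conjTranspose_mul_self_eq_smul_one {n : Type*} [Fintype n]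
    [DecidableEq n] {A : Matrix n n ℂ} {r : ℝ} (h : Aᴴ * A = (r : ℂ) • 1) :
    traceNorm A = Fintype.card n * √r := by
  simp [traceNorm, IsHermitian.eigenvalues_eq_of_eq_smul_one _ h]

lemma traceNorm_fin_two_of_diag_eq_zero {A : Matrix (Fin 2) (Fin 2) ℂ} (h₀₀ : A 0 0 = 0)
    (h₁₁ : A 1 1 = 0) (h : ‖A 1 0‖ = ‖A 0 1‖) : traceNorm A = 2 * ‖A 0 1‖ := by
  suffices hA : Aᴴ * A = ((‖A 0 1‖ ^ 2 : ℝ) : ℂ) • 1 by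
    rw [traceNorm_eq_of_conjTranspose_mul_self_eq_smul_one hA, Real.sqrt_sq (norm_nonneg _)]
    simp
  ext i j
  fin_cases i <;> fin_cases j <;>
    simp [Matrix.mul_apply, Fin.sum_univ_two, h₀₀, h₁₁, Complex.conj_mul', h]

lemma rotChan_diagonal_apply {n : Type*} [Fintype n] [DecidableEq n] (α : ℝ) (d : n → ℝ)
    (σ : Matrix n n ℂ) (i j : n) :
    rotChan α (diagonal fun k => (d k : ℂ)) σ i j
      = Complex.exp ((α * (d j - d i) : ℝ) * Complex.I) * σ i j := by
  have hexp : ∀ c : ℂ, NormedSpace.exp (c • diagonal fun k => (d k : ℂ))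
      = diagonal fun k => Complex.exp (c * d k) := fun c => by
    rw [← diagonal_smul, Matrix.exp_diagonal]
    simp [Pi.exp_def, Complex.exp_eq_exp_ℂ]
  rw [rotChan, hexp, hexp, mul_diagonal, diagonal_mul, mul_right_comm, ← Complex.exp_add]
  push_cast
  ring_nf

lemma Complex.norm_exp_mul_I_sub_exp_mul_I (a b : ℝ) :
    ‖Complex.exp (a * Complex.I) - Complex.exp (b * Complex.I)‖ = 2 * |Real.sin ((a - b) / 2)| := by
  have hfactor : Complex.exp (a * Complex.I) - Complex.exp (b * Complex.I)
      = Complex.exp (b * Complex.I) * (Complex.exp (Complex.I * (a - b : ℝ)) - 1) := by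
    rw [mul_sub, mul_one, ← Complex.exp_add]
    push_cast
    ring_nf
  rw [hfactor, norm_mul, Complex.norm_exp_ofReal_mul_I, one_mul,
    Complex.norm_exp_I_mul_ofReal_sub_one, norm_mul, Real.norm_eq_abs, Real.norm_eq_abs, abs_two]

lemma norm_rotChan_diagonal_sub_apply {n : Type*} [Fintype n] [DecidableEq n] (α : ℝ)
    (d e : n → ℝ) (σ : Matrix n n ℂ) (i j : n) :
    ‖(rotChan α (diagonal fun k => (d k : ℂ)) σ - rotChan α (diagonal fun k => (e k : ℂ)) σ) i j‖
      = 2 * |Real.sin (α * ((d j - d i) - (e j - e i)) / 2)| * ‖σ i j‖ := by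
  rw [Matrix.sub_apply, rotChan_diagonal_apply, rotChan_diagonal_apply, ← sub_mul, norm_mul,
    Complex.norm_exp_mul_I_sub_exp_mul_I, ← mul_sub]

lemma traceNorm_rotChan_diagonal_sub_fin_two (α : ℝ) (d e : Fin 2 → ℝ)
    {σ : Matrix (Fin 2) (Fin 2) ℂ} (hσ : σ.IsHermitian) :
    traceNorm (rotChan α (diagonal fun k => (d k : ℂ)) σ
        - rotChan α (diagonal fun k => (e k : ℂ)) σ)
      = 4 * |Real.sin (α * ((d 1 - d 0) - (e 1 - e 0)) / 2)| * ‖σ 0 1‖ := by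
  have hdiag : ∀ i, (rotChan α (diagonal fun k => (d k : ℂ)) σ
      - rotChan α (diagonal fun k => (e k : ℂ)) σ) i i = 0 := fun i => by
    rw [← norm_eq_zero, norm_rotChan_diagonal_sub_apply]
    simp
  have hσ₁₀ : ‖σ 1 0‖ = ‖σ 0 1‖ := by rw [← hσ.apply 1 0, norm_star]
  rw [traceNorm_fin_two_of_diag_eq_zero (hdiag 0) (hdiag 1), norm_rotChan_diagonal_sub_apply]
  · ring
  · rw [norm_rotChan_diagonal_sub_apply, norm_rotChan_diagonal_sub_apply, hσ₁₀,
      ← abs_neg (Real.sin _), ← Real.sin_neg]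
    ring_nf

lemma Matrix.PosSemidef.norm_apply_zero_one_le_half {σ : Matrix (Fin 2) (Fin 2) ℂ}
    (hσ : σ.PosSemidef) (htr : σ.trace = 1) : ‖σ 0 1‖ ≤ 1 / 2 := by
  set a := (σ 0 0).re
  set b := (σ 1 1).re
  have hab : a + b = 1 := by
    simpa [trace_fin_two] using congrArg Complex.re htr
  have hdet : σ.det = ((a * b - ‖σ 0 1‖ ^ 2 : ℝ) : ℂ) := by
    rw [det_fin_two, ← hσ.1.coe_re_apply_self 0, ← hσ.1.coe_re_apply_self 1,
      ← hσ.1.apply 1 0, Complex.star_def, Complex.mul_conj']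
    push_cast
    rfl
  have hdet_nonneg : 0 ≤ a * b - ‖σ 0 1‖ ^ 2 :=
    Complex.zero_le_real.mp (hdet ▸ hσ.det_nonneg)
  nlinarith [norm_nonneg (σ 0 1), sq_nonneg (a - b)]

lemma exists_posSemidef_trace_eq_one_norm_apply_zero_one_eq_half :
    ∃ σ : Matrix (Fin 2) (Fin 2) ℂ, σ.PosSemidef ∧ σ.trace = 1 ∧ ‖σ 0 1‖ = 1 / 2 := by
  refine ⟨(2⁻¹ : ℝ) • vecMulVec 1 (star 1), ?_, ?_, ?_⟩
  · exact (posSemidef_vecMulVec_self_star 1).smul (by norm_num)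
  · norm_num [trace_fin_two]
  · simp

theorem partial_reflection_mixedness_error_general (α x ε : ℝ)
    (hx : x ∈ Set.Icc (0 : ℝ) ε) (hα : α ∈ Set.Icc (-Real.pi) Real.pi)
    (ψ ρ : Matrix (Fin 2) (Fin 2) ℂ)
    (hψ : ψ = Matrix.single 0 0 1)
    (hρ : ρ = Matrix.diagonal ![((1 - x : ℝ) : ℂ), ((x : ℝ) : ℂ)]) :
    (∀ σ : Matrix (Fin 2) (Fin 2) ℂ, σ.PosSemidef → σ.trace = 1 →
        (1 / 2) * traceNorm (rotChan α ψ σ - rotChan α ρ σ)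
          = 2 * ‖σ 0 1‖ * |Real.sin (α * x)|) ∧
      IsGreatest {y : ℝ | ∃ σ : Matrix (Fin 2) (Fin 2) ℂ, σ.PosSemidef ∧ σ.trace = 1 ∧
          y = (1 / 2) * traceNorm (rotChan α ψ σ - rotChan α ρ σ)}
        |Real.sin (α * x)| ∧
      |Real.sin (α * x)| ≤ Real.pi * ε := by
  have hψ' : ψ = diagonal fun k => ((![1, 0] : Fin 2 → ℝ) k : ℂ) := by
    rw [hψ]
    ext i j
    fin_cases i <;> fin_cases j <;> simp [single]
  have hρ' : ρ = diagonal fun k => ((![1 - x, x] : Fin 2 → ℝ) k : ℂ) := by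
    rw [hρ]
    congr 1
    ext k
    fin_cases k <;> rfl
  have hdist : ∀ σ : Matrix (Fin 2) (Fin 2) ℂ, σ.PosSemidef →
      (1 / 2) * traceNorm (rotChan α ψ σ - rotChan α ρ σ) = 2 * ‖σ 0 1‖ * |Real.sin (α * x)| := by
    intro σ hσ
    have hgap : α * ((0 - 1) - (x - (1 - x))) / 2 = -(α * x) := by ring
    rw [hψ', hρ', traceNorm_rotChan_diagonal_sub_fin_two α _ _ hσ.1]
    simp only [Matrix.cons_val_zero, Matrix.cons_val_one, hgap, Real.sin_neg, abs_neg]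
    ring
  refine ⟨fun σ hσ _ => hdist σ hσ, ⟨?_, ?_⟩, ?_⟩
  · obtain ⟨σ, hσ, htr, hq⟩ := exists_posSemidef_trace_eq_one_norm_apply_zero_one_eq_half
    exact ⟨σ, hσ, htr, by rw [hdist σ hσ, hq]; ring⟩
  · rintro _ ⟨σ, hσ, htr, rfl⟩
    rw [hdist σ hσ]
    nlinarith [hσ.norm_apply_zero_one_le_half htr, abs_nonneg (Real.sin (α * x))]
  · calc |Real.sin (α * x)| ≤ |α * x| := Real.abs_sin_le_abs
      _ = |α| * x := by rw [abs_mul, abs_of_nonneg hx.1]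
      _ ≤ Real.pi * ε := mul_le_mul (abs_le.2 hα) hx.2 hx.1 Real.pi_pos.le

/-- On a qubit, with `ψ = |0⟩⟨0|` and `ρ = (1-x)|0⟩⟨0| + x|1⟩⟨1|`, `x ∈ [0, ε]`,
`ε < 1/2`: for every state `σ` with off-diagonal entry `q = σ₀₁`,
`(1/2)‖E_α^ψ(σ) - E_α^ρ(σ)‖₁ = 2|q|·|sin(αx)|`; maximizing over `σ` gives
`(1/2)‖E_α^ψ - E_α^ρ‖_Tr = |sin(αx)| ≤ π·ε` for `α ∈ [-π, π]`. -/
theorem partial_reflection_mixedness_error (α x ε : ℝ)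
    (hε : ε < 1 / 2) (hx : x ∈ Set.Icc (0 : ℝ) ε) (hα : α ∈ Set.Icc (-Real.pi) Real.pi)
    (ψ ρ : Matrix (Fin 2) (Fin 2) ℂ)
    (hψ : ψ = Matrix.single 0 0 1)
    (hρ : ρ = Matrix.diagonal ![((1 - x : ℝ) : ℂ), ((x : ℝ) : ℂ)]) :
    (∀ σ : Matrix (Fin 2) (Fin 2) ℂ, σ.PosSemidef → σ.trace = 1 →
        (1 / 2) * traceNorm (rotChan α ψ σ - rotChan α ρ σ)
          = 2 * ‖σ 0 1‖ * |Real.sin (α * x)|) ∧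
      IsGreatest {y : ℝ | ∃ σ : Matrix (Fin 2) (Fin 2) ℂ, σ.PosSemidef ∧ σ.trace = 1 ∧
          y = (1 / 2) * traceNorm (rotChan α ψ σ - rotChan α ρ σ)}
        |Real.sin (α * x)| ∧
      |Real.sin (α * x)| ≤ Real.pi * ε :=
  partial_reflection_mixedness_error_general α x ε hx hα ψ ρ hψ hρ
end

section
/- Let A and B be Hermitian operators on a Hilbert space and s > 0. Then for any unitarily invariant norm, ‖e^{-i√s·B}e^{-i√s·A}e^{i√s·B}e^{i√s·A} - e^{s[A,B]}‖ ≤ s^{3/2}·(‖[A,[A,B]]‖ + ‖[B,[B,A]]‖). -/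
open Matrix ComplexOrder

open Set Filter Topology NormedSpace

/-!
Put `a = i√s A` and `b = i√s B`, which are skew-Hermitian, and `c = [b, a] = s [A, B]`.
Conjugation gives `e^{-b} e^{-a} e^{b} = e^{-a'}` with `a' = e^{-b} a e^{b}`, and the group
commutator `e^{-a'} e^{a}` is compared with `e^{c}` in two steps:
`e^{-a'} e^{a} ≈ e^{-a + c} e^{a}`, because `a' = a - c` up to a second-order term controlled by
`[b, [b, a]]`, and `e^{-a + c} e^{a} ≈ e^{c}`, by the first-order Trotter error
`‖e^X e^Y - e^{X + Y}‖ ≤ ‖[X, Y]‖ / 2`. Each of the two errors is at most `s^{3/2} / 2` times the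
norm of the corresponding double commutator.

All estimates come from one mean value inequality along a path `v ↦ e^{vX} W(v) e^{-vY}`:
its derivative is a product of unitaries with a commutator, so a unitarily invariant norm only
sees the commutator.
-/

section MeanValue

variable {E : Type*} [NormedAddCommGroup E] [NormedSpace ℝ E]

theorem Seminorm.continuous_of_finiteDimensional [FiniteDimensional ℝ E] (p : Seminorm ℝ E) :
    Continuous p :=
  continuousOn_univ.mp (p.convexOn.continuousOn isOpen_univ)

theorem Seminorm.map_sub_le_of_map_deriv_le (p : Seminorm ℝ E) (hp : Continuous p)
    {f f' : ℝ → E} {B B' : ℝ → ℝ} {a b : ℝ} (hab : a ≤ b)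
    (hf : ∀ x, HasDerivAt f (f' x) x) (hB : ∀ x, HasDerivAt B (B' x) x)
    (bound : ∀ x ∈ Ico a b, p (f' x) ≤ B' x) :
    p (f b - f a) ≤ B b - B a := by
  have hfc : Continuous f := continuous_iff_continuousAt.2 fun x => (hf x).continuousAt
  have hBc : Continuous B := continuous_iff_continuousAt.2 fun x => (hB x).continuousAt
  -- `p (f · - f a)` need not be differentiable, but its right Dini slopes are at most `p (f' x)`.
  have hslope (x z : ℝ) (hxz : x < z) :
      slope (fun y => p (f y - f a)) x z ≤ p (slope f x z) := by
    rw [slope_def_module, slope_def_module, smul_eq_mul, map_smul_eq_mul,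
      Real.norm_of_nonneg (inv_nonneg.2 (sub_pos.2 hxz).le)]
    gcongr
    simpa using (le_abs_self _).trans (p.norm_sub_map_le_sub (f z - f a) (f x - f a))
  refine image_le_of_liminf_slope_right_le_deriv_boundary (f := fun x => p (f x - f a))
    (B := fun x => B x - B a) (hp.comp (hfc.sub continuous_const)).continuousOn (by simp)
    (hBc.sub continuous_const).continuousOn (fun x _ => ((hB x).sub_const _).hasDerivWithinAt)
    (fun x hx r hr => ?_) ⟨hab, le_rfl⟩
  have hlim : Tendsto (fun z => p (slope f x z)) (𝓝[>] x) (𝓝 (p (f' x))) :=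
    (hp.tendsto _).comp ((hasDerivAt_iff_tendsto_slope.mp (hf x)).mono_left
      (nhdsWithin_mono _ fun _ hz => ne_of_gt hz))
  exact ((hlim.eventually (gt_mem_nhds ((bound x hx).trans_lt hr))).and
    self_mem_nhdsWithin).frequently.mono fun z ⟨hz, hxz⟩ => (hslope x z hxz).trans_lt hz

theorem Seminorm.map_sub_le_of_map_deriv_le_mul_pow [FiniteDimensional ℝ E] (p : Seminorm ℝ E)
    {f f' : ℝ → E} {c t : ℝ} (k : ℕ) (ht : 0 ≤ t) (hf : ∀ x, HasDerivAt f (f' x) x)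
    (bound : ∀ x ∈ Ico 0 t, p (f' x) ≤ c * x ^ k) :
    p (f t - f 0) ≤ c * t ^ (k + 1) / (k + 1) := by
  have hB : ∀ x : ℝ, HasDerivAt (fun x => c * x ^ (k + 1) / (k + 1)) (c * x ^ k) x := fun x => by
    refine (((hasDerivAt_pow (k + 1) x).const_mul c).div_const ((k : ℝ) + 1)).congr_deriv ?_
    rw [Nat.add_sub_cancel]
    push_cast
    field_simp
  simpa using p.map_sub_le_of_map_deriv_le p.continuous_of_finiteDimensional ht hf hB bound

end MeanValue

theorem skewAdjoint.lie_mem {R : Type*} [Ring R] [StarRing R] {a b : R}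
    (ha : a ∈ skewAdjoint R) (hb : b ∈ skewAdjoint R) : ⁅a, b⁆ ∈ skewAdjoint R := by
  rw [skewAdjoint.mem_iff] at *
  rw [Ring.lie_def, star_sub, star_mul, star_mul, ha, hb]
  noncomm_ring

section UnitarilyInvariant

attribute [local instance] Matrix.linftyOpNormedRing Matrix.linftyOpNormedAlgebra

variable {n : Type*} [Fintype n] [DecidableEq n]

namespace Matrix

theorem star_exp_of_mem_skewAdjoint {X : Matrix n n ℂ} (hX : X ∈ skewAdjoint (Matrix n n ℂ)) :
    star (exp X) = exp (-X) := by
  rw [star_eq_conjTranspose, ← exp_conjTranspose, ← star_eq_conjTranspose,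
    skewAdjoint.mem_iff.1 hX]

theorem exp_mem_unitaryGroup {X : Matrix n n ℂ} (hX : X ∈ skewAdjoint (Matrix n n ℂ)) :
    exp X ∈ unitaryGroup n ℂ := by
  rw [mem_unitaryGroup_iff', star_exp_of_mem_skewAdjoint hX,
    ← exp_add_of_commute _ _ (Commute.refl X).neg_left, neg_add_cancel, exp_zero]

theorem exp_conj_exp (X Y : Matrix n n ℂ) :
    exp (exp X * Y * exp (-X)) = exp X * exp Y * exp (-X) := by
  rw [exp_neg, exp_conj _ _ (isUnit_exp X)]

theorem hasDerivAt_exp_smul_mul_mul_exp_smul_neg (X Y : Matrix n n ℂ) {W : ℝ → Matrix n n ℂ}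
    {W' : Matrix n n ℂ} {u : ℝ} (hW : HasDerivAt W W' u) :
    HasDerivAt (fun v : ℝ => exp (v • X) * W v * exp (v • -Y))
      (exp (u • X) * (X * W u + W' - W u * Y) * exp (u • -Y)) u := by
  refine (((hasDerivAt_exp_smul_const X u).mul hW).mul
    (hasDerivAt_exp_smul_const' (-Y) u)).congr_deriv ?_
  simp only [Pi.mul_apply]
  noncomm_ring

end Matrix

def Seminorm.IsUnitarilyInvariant (p : Seminorm ℂ (Matrix n n ℂ)) : Prop :=
  ∀ U V X : Matrix n n ℂ, U ∈ Matrix.unitaryGroup n ℂ → V ∈ Matrix.unitaryGroup n ℂ →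
    p (U * X * V) = p X

namespace Seminorm.IsUnitarilyInvariant

variable {p : Seminorm ℂ (Matrix n n ℂ)} (hp : p.IsUnitarilyInvariant) {X Y : Matrix n n ℂ}
include hp

theorem map_exp_mul_mul_exp (hX : X ∈ skewAdjoint (Matrix n n ℂ))
    (hY : Y ∈ skewAdjoint (Matrix n n ℂ)) (Z : Matrix n n ℂ) :
    p (exp X * Z * exp Y) = p Z :=
  hp _ _ Z (exp_mem_unitaryGroup hX) (exp_mem_unitaryGroup hY)

theorem map_exp_mul (hX : X ∈ skewAdjoint (Matrix n n ℂ)) (Z : Matrix n n ℂ) :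
    p (exp X * Z) = p Z := by
  simpa using hp _ _ Z (exp_mem_unitaryGroup hX) (one_mem _)

theorem map_mul_exp (hX : X ∈ skewAdjoint (Matrix n n ℂ)) (Z : Matrix n n ℂ) :
    p (Z * exp X) = p Z := by
  simpa using hp _ _ Z (one_mem _) (exp_mem_unitaryGroup hX)

theorem map_exp_conj_sub_le (hX : X ∈ skewAdjoint (Matrix n n ℂ)) (Z : Matrix n n ℂ) :
    p (exp X * Z * exp (-X) - Z) ≤ p ⁅X, Z⁆ := by
  have hd (u : ℝ) : HasDerivAt (fun v : ℝ => exp (v • X) * Z * exp (v • -X))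
      (exp (u • X) * ⁅X, Z⁆ * exp (u • -X)) u :=
    (hasDerivAt_exp_smul_mul_mul_exp_smul_neg X X (hasDerivAt_const u Z)).congr_deriv
      (by rw [Ring.lie_def, add_zero])
  have hbound (u : ℝ) (_ : u ∈ Ico (0 : ℝ) 1) :
      p (exp (u • X) * ⁅X, Z⁆ * exp (u • -X)) ≤ p ⁅X, Z⁆ * u ^ 0 := by
    rw [hp.map_exp_mul_mul_exp (skewAdjoint.smul_mem u hX)
      (skewAdjoint.smul_mem u (neg_mem hX)), pow_zero, mul_one]
  simpa using (p.restrictScalars ℝ).map_sub_le_of_map_deriv_le_mul_pow 0 zero_le_one hd hbound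

theorem map_exp_conj_sub_sub_lie_le (hX : X ∈ skewAdjoint (Matrix n n ℂ)) (Z : Matrix n n ℂ) :
    p (exp X * Z * exp (-X) - Z - ⁅X, Z⁆) ≤ p ⁅X, ⁅X, Z⁆⁆ / 2 := by
  have hd (u : ℝ) : HasDerivAt (fun v : ℝ => exp (v • X) * Z * exp (v • -X) - Z - v • ⁅X, Z⁆)
      (exp (u • X) * ⁅X, Z⁆ * exp (-(u • X)) - ⁅X, Z⁆) u :=
    (((hasDerivAt_exp_smul_mul_mul_exp_smul_neg X X (hasDerivAt_const u Z)).sub_const Z).sub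
      ((hasDerivAt_id u).smul_const ⁅X, Z⁆)).congr_deriv
      (by rw [Ring.lie_def, add_zero, one_smul, smul_neg])
  have hbound (u : ℝ) (hu : u ∈ Ico (0 : ℝ) 1) :
      p (exp (u • X) * ⁅X, Z⁆ * exp (-(u • X)) - ⁅X, Z⁆) ≤ p ⁅X, ⁅X, Z⁆⁆ * u ^ 1 :=
    calc _ ≤ p ⁅u • X, ⁅X, Z⁆⁆ := hp.map_exp_conj_sub_le (skewAdjoint.smul_mem u hX) _
      _ = p ⁅X, ⁅X, Z⁆⁆ * u ^ 1 := by
        rw [Ring.lie_def (u • X), smul_mul_assoc, mul_smul_comm, ← smul_sub, ← Ring.lie_def,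
          ← Complex.coe_smul, map_smul_eq_mul, Complex.norm_real,
          Real.norm_of_nonneg hu.1, pow_one, mul_comm]
  have h := (p.restrictScalars ℝ).map_sub_le_of_map_deriv_le_mul_pow 1 zero_le_one hd hbound
  norm_num at h
  exact h

theorem map_exp_sub_exp_le (hX : X ∈ skewAdjoint (Matrix n n ℂ))
    (hY : Y ∈ skewAdjoint (Matrix n n ℂ)) : p (exp X - exp Y) ≤ p (X - Y) := by
  have hd (u : ℝ) : HasDerivAt (fun v : ℝ => exp (v • X) * 1 * exp (v • -Y))
      (exp (u • X) * (X - Y) * exp (u • -Y)) u :=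
    (hasDerivAt_exp_smul_mul_mul_exp_smul_neg X Y (hasDerivAt_const u 1)).congr_deriv
      (by rw [mul_one, one_mul, add_zero])
  have hbound (u : ℝ) (_ : u ∈ Ico (0 : ℝ) 1) :
      p (exp (u • X) * (X - Y) * exp (u • -Y)) ≤ p (X - Y) * u ^ 0 := by
    rw [hp.map_exp_mul_mul_exp (skewAdjoint.smul_mem u hX)
      (skewAdjoint.smul_mem u (neg_mem hY)), pow_zero, mul_one]
  have h := (p.restrictScalars ℝ).map_sub_le_of_map_deriv_le_mul_pow 0 zero_le_one hd hbound
  simp only [one_smul, zero_smul, exp_zero, mul_one] at h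
  calc p (exp X - exp Y) = p ((exp X * exp (-Y) - 1) * exp Y) := by
        rw [sub_mul, mul_assoc, ← exp_add_of_commute _ _ (Commute.refl Y).neg_left,
          neg_add_cancel, exp_zero, mul_one, one_mul]
    _ = p (exp X * exp (-Y) - 1) := hp.map_mul_exp hY _
    _ ≤ p (X - Y) := by simpa using h

theorem map_exp_mul_exp_sub_exp_add_le (hX : X ∈ skewAdjoint (Matrix n n ℂ))
    (hY : Y ∈ skewAdjoint (Matrix n n ℂ)) :
    p (exp X * exp Y - exp (X + Y)) ≤ p ⁅X, Y⁆ / 2 := by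
  have hd (u : ℝ) : HasDerivAt (fun v : ℝ => exp (v • X) * exp (v • Y) * exp (v • -(X + Y)))
      (exp (u • X) * (X * exp (u • Y) - exp (u • Y) * X) * exp (u • -(X + Y))) u :=
    (hasDerivAt_exp_smul_mul_mul_exp_smul_neg X (X + Y)
      (hasDerivAt_exp_smul_const Y u)).congr_deriv (by noncomm_ring)
  have hbound (u : ℝ) (hu : u ∈ Ico (0 : ℝ) 1) :
      p (exp (u • X) * (X * exp (u • Y) - exp (u • Y) * X) * exp (u • -(X + Y)))
        ≤ p ⁅X, Y⁆ * u ^ 1 := by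
    have huY : -(u • Y) ∈ skewAdjoint (Matrix n n ℂ) := neg_mem (skewAdjoint.smul_mem u hY)
    rw [hp.map_exp_mul_mul_exp (skewAdjoint.smul_mem u hX)
      (skewAdjoint.smul_mem u (neg_mem (add_mem hX hY)))]
    calc p (X * exp (u • Y) - exp (u • Y) * X)
        = p (exp (-(u • Y)) * X * exp (-(-(u • Y))) - X) := by
          rw [neg_neg, ← hp.map_exp_mul huY, mul_sub, ← mul_assoc, ← mul_assoc,
            ← exp_add_of_commute _ _ (Commute.refl (u • Y)).neg_left, neg_add_cancel, exp_zero,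
            one_mul]
      _ ≤ p ⁅-(u • Y), X⁆ := hp.map_exp_conj_sub_le huY X
      _ = p ⁅X, Y⁆ * u ^ 1 := by
        have : ⁅-(u • Y), X⁆ = (u : ℂ) • ⁅X, Y⁆ := by
          simp only [Ring.lie_def, Complex.coe_smul, neg_mul, mul_neg, smul_mul_assoc,
            mul_smul_comm, smul_sub]
          abel
        rw [this, map_smul_eq_mul, Complex.norm_real, Real.norm_of_nonneg hu.1, pow_one, mul_comm]
  have h := (p.restrictScalars ℝ).map_sub_le_of_map_deriv_le_mul_pow 1 zero_le_one hd hbound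
  simp only [one_smul, zero_smul, exp_zero, mul_one, one_pow] at h
  calc p (exp X * exp Y - exp (X + Y))
      = p ((exp X * exp Y * exp (-(X + Y)) - 1) * exp (X + Y)) := by
        rw [sub_mul, mul_assoc _ (exp (-(X + Y))),
          ← exp_add_of_commute _ _ (Commute.refl (X + Y)).neg_left, neg_add_cancel, exp_zero,
          mul_one, one_mul]
    _ = p (exp X * exp Y * exp (-(X + Y)) - 1) := hp.map_mul_exp (add_mem hX hY) _
    _ ≤ p ⁅X, Y⁆ / 2 := h.trans_eq (by norm_num)

theorem map_groupCommutator_exp_sub_exp_lie_le {a b : Matrix n n ℂ}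
    (ha : a ∈ skewAdjoint (Matrix n n ℂ)) (hb : b ∈ skewAdjoint (Matrix n n ℂ)) :
    p (exp (-b) * exp (-a) * exp b * exp a - exp ⁅b, a⁆)
      ≤ (p ⁅⁅b, a⁆, a⁆ + p ⁅b, ⁅b, a⁆⁆) / 2 := by
  have hc : ⁅b, a⁆ ∈ skewAdjoint (Matrix n n ℂ) := skewAdjoint.lie_mem hb ha
  have hca : -a + ⁅b, a⁆ ∈ skewAdjoint (Matrix n n ℂ) := add_mem (neg_mem ha) hc
  set a' := exp (-b) * a * exp (-(-b)) with ha'_def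
  have ha' : a' ∈ skewAdjoint (Matrix n n ℂ) := by
    simpa only [ha'_def, star_exp_of_mem_skewAdjoint (neg_mem hb)] using
      skewAdjoint.conjugate ha (exp (-b))
  have hconj : exp (-b) * exp (-a) * exp b = exp (-a') := by
    rw [ha'_def, ← neg_neg b, neg_neg (-b), ← exp_conj_exp, mul_neg, neg_mul]
  have h₁ : p (exp (-a') - exp (-a + ⁅b, a⁆)) ≤ p ⁅b, ⁅b, a⁆⁆ / 2 :=
    calc p (exp (-a') - exp (-a + ⁅b, a⁆)) ≤ p (-a' - (-a + ⁅b, a⁆)) :=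
          hp.map_exp_sub_exp_le (neg_mem ha') hca
      _ = p (exp (-b) * a * exp (-(-b)) - a - ⁅-b, a⁆) := by
          rw [← map_neg_eq_map, ha'_def]
          simp only [Ring.lie_def]
          congr 1
          noncomm_ring
      _ ≤ p ⁅-b, ⁅-b, a⁆⁆ / 2 := hp.map_exp_conj_sub_sub_lie_le (neg_mem hb) a
      _ = p ⁅b, ⁅b, a⁆⁆ / 2 := by
          simp only [Ring.lie_def]
          congr 2
          noncomm_ring
  have h₂ : p (exp (-a + ⁅b, a⁆) * exp a - exp ⁅b, a⁆) ≤ p ⁅⁅b, a⁆, a⁆ / 2 := by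
    have h := hp.map_exp_mul_exp_sub_exp_add_le hca ha
    rwa [neg_add_cancel_comm, Ring.lie_def (-a + _), add_mul, mul_add, neg_mul, mul_neg,
      add_sub_add_left_eq_sub, ← Ring.lie_def] at h
  calc p (exp (-b) * exp (-a) * exp b * exp a - exp ⁅b, a⁆)
      = p ((exp (-a') - exp (-a + ⁅b, a⁆)) * exp a
          + (exp (-a + ⁅b, a⁆) * exp a - exp ⁅b, a⁆)) := by
        rw [hconj]
        noncomm_ring
    _ ≤ p (exp (-a') - exp (-a + ⁅b, a⁆)) + p (exp (-a + ⁅b, a⁆) * exp a - exp ⁅b, a⁆) := by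
        rw [← hp.map_mul_exp ha (exp (-a') - _)]
        exact map_add_le_add p _ _
    _ ≤ (p ⁅⁅b, a⁆, a⁆ + p ⁅b, ⁅b, a⁆⁆) / 2 := by linarith

end Seminorm.IsUnitarilyInvariant

end UnitarilyInvariant

theorem Seminorm.IsUnitarilyInvariant.map_groupCommutator_exp_smul_sub_le {n : Type*} [Fintype n]
    [DecidableEq n] {p : Seminorm ℂ (Matrix n n ℂ)} (hp : p.IsUnitarilyInvariant)
    {A B : Matrix n n ℂ} (hA : A.IsHermitian) (hB : B.IsHermitian) {z : ℂ}
    (hz : z ∈ skewAdjoint ℂ) :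
    p (exp (-z • B) * exp (-z • A) * exp (z • B) * exp (z • A)
        - exp ((-z ^ 2) • (A * B - B * A)))
      ≤ ‖z‖ ^ 3 * (p (A * (A * B - B * A) - (A * B - B * A) * A)
          + p (B * (B * A - A * B) - (B * A - A * B) * B)) / 2 := by
  have hlie : ⁅z • B, z • A⁆ = (-z ^ 2) • (A * B - B * A) := by
    simp only [Ring.lie_def, smul_mul_assoc, mul_smul_comm, smul_smul]
    module
  have hlieA : ⁅⁅z • B, z • A⁆, z • A⁆ = z ^ 3 • (A * (A * B - B * A) - (A * B - B * A) * A) := by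
    simp only [Ring.lie_def, smul_mul_assoc, mul_smul_comm, smul_smul, mul_sub, sub_mul, smul_sub]
    module
  have hlieB : ⁅z • B, ⁅z • B, z • A⁆⁆ = z ^ 3 • (B * (B * A - A * B) - (B * A - A * B) * B) := by
    simp only [Ring.lie_def, smul_mul_assoc, mul_smul_comm, smul_smul, mul_sub, sub_mul, smul_sub]
    module
  have key := hp.map_groupCommutator_exp_sub_exp_lie_le
    (hA.isSelfAdjoint.smul_mem_skewAdjoint hz) (hB.isSelfAdjoint.smul_mem_skewAdjoint hz)
  rw [hlieA, hlieB, map_smul_eq_mul, map_smul_eq_mul, norm_pow, ← mul_add] at key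
  rw [neg_smul, neg_smul, ← hlie]
  exact key

theorem group_commutator_bound_general {n : Type*} [Fintype n] [DecidableEq n]
    (A B : Matrix n n ℂ) (hA : A.IsHermitian) (hB : B.IsHermitian)
    (s : ℝ) (hs : 0 < s)
    (ν : Matrix n n ℂ → ℝ)
    (hν_add : ∀ X Y, ν (X + Y) ≤ ν X + ν Y)
    (hν_smul : ∀ (c : ℂ) X, ν (c • X) = ‖c‖ * ν X)
    (hν_ui : ∀ (U V X : Matrix n n ℂ), U ∈ Matrix.unitaryGroup n ℂ →
      V ∈ Matrix.unitaryGroup n ℂ → ν (U * X * V) = ν X) :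
    ν (NormedSpace.exp (-(Complex.I * Real.sqrt s) • B)
        * NormedSpace.exp (-(Complex.I * Real.sqrt s) • A)
        * NormedSpace.exp ((Complex.I * Real.sqrt s) • B)
        * NormedSpace.exp ((Complex.I * Real.sqrt s) • A)
        - NormedSpace.exp ((s : ℂ) • (A * B - B * A)))
      ≤ s ^ ((3 : ℝ) / 2) *
        (ν (A * (A * B - B * A) - (A * B - B * A) * A)
          + ν (B * (B * A - A * B) - (B * A - A * B) * B)) := by
  have hz : Complex.I * Real.sqrt s ∈ skewAdjoint ℂ := by
    simp [skewAdjoint.mem_iff, Complex.conj_ofReal]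
  have hz2 : -(Complex.I * Real.sqrt s) ^ 2 = s := by
    simp [mul_pow, ← Complex.ofReal_pow, Real.sq_sqrt hs.le]
  have hz3 : ‖Complex.I * Real.sqrt s‖ ^ 3 = s ^ ((3 : ℝ) / 2) := by
    rw [norm_mul, Complex.norm_I, one_mul, Complex.norm_real, Real.norm_of_nonneg
      (Real.sqrt_nonneg s), Real.sqrt_eq_rpow, ← Real.rpow_natCast, ← Real.rpow_mul hs.le]
    norm_num
  have h := Seminorm.IsUnitarilyInvariant.map_groupCommutator_exp_smul_sub_le
    (p := Seminorm.of ν hν_add hν_smul) hν_ui hA hB hz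
  rw [hz2, hz3] at h
  exact h.trans (half_le_self (by positivity))

/-- Group commutator approximation: for Hermitian `A, B` on a finite-dimensional
Hilbert space, `s > 0`, and any unitarily invariant norm `ν`,
`ν(e^{-i√s B} e^{-i√s A} e^{i√s B} e^{i√s A} - e^{s[A,B]})
  ≤ s^{3/2} (ν([A,[A,B]]) + ν([B,[B,A]]))`. -/
theorem group_commutator_bound {n : Type*} [Fintype n] [DecidableEq n]
    (A B : Matrix n n ℂ) (hA : A.IsHermitian) (hB : B.IsHermitian)
    (s : ℝ) (hs : 0 < s)
    (ν : Matrix n n ℂ → ℝ)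
    (hν_nonneg : ∀ X, 0 ≤ ν X)
    (hν_add : ∀ X Y, ν (X + Y) ≤ ν X + ν Y)
    (hν_smul : ∀ (c : ℂ) X, ν (c • X) = ‖c‖ * ν X)
    (hν_ui : ∀ (U V X : Matrix n n ℂ), U ∈ Matrix.unitaryGroup n ℂ →
      V ∈ Matrix.unitaryGroup n ℂ → ν (U * X * V) = ν X) :
    ν (NormedSpace.exp (-(Complex.I * Real.sqrt s) • B)
        * NormedSpace.exp (-(Complex.I * Real.sqrt s) • A)
        * NormedSpace.exp ((Complex.I * Real.sqrt s) • B)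
        * NormedSpace.exp ((Complex.I * Real.sqrt s) • A)
        - NormedSpace.exp ((s : ℂ) • (A * B - B * A)))
      ≤ s ^ ((3 : ℝ) / 2) *
        (ν (A * (A * B - B * A) - (A * B - B * A) * A)
          + ν (B * (B * A - A * B) - (B * A - A * B) * B)) :=
  group_commutator_bound_general A B hA hB s hs ν hν_add hν_smul hν_ui
end

section
/- Fix ε > 0 small. The larger solution x₂ ∈ (0,1) of the equation h(x) + ε = x, where h(x) = sech((2L+1)·arcsech(x)), satisfies x₂ = 1 - ε/(4(L²+L)) + O(ε²). -/
/-!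
Substituting `x = sech t` turns `h x + ε = x` into `sech t - sech (a * t) = ε` with `a = 2L + 1`.
The left side vanishes at `0` and is strictly increasing on `[0, 1/a]`, so the larger root `x₂`
corresponds to the least positive root `t`, which the intermediate value theorem places in
`(0, 1/a²)` for small `ε`. Since `sech u = 1 - u²/2 + O(u⁴)`, there `ε = (a² - 1) t²/2 + O(t⁴)`,
so `t² = O(ε)` and `x₂ = sech t = 1 - ε/(a² - 1) + O(ε²)`, where `a² - 1 = 4(L² + L)`.
-/

open Set
open Real (cosh sinh exp)

lemma arcosh_eq_real_arcosh : arcosh = Real.arcosh := rfl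

lemma arcsech_sech {t : ℝ} (ht : 0 ≤ t) : arcsech (sech t) = t := by
  rw [arcsech, sech, one_div_one_div, arcosh_eq_real_arcosh, Real.arcosh_cosh ht]

lemma sech_arcsech {y : ℝ} (h0 : 0 < y) (h1 : y ≤ 1) : sech (arcsech y) = y := by
  rw [sech, arcsech, arcosh_eq_real_arcosh, Real.cosh_arcosh (one_le_one_div h0 h1),
    one_div_one_div]

lemma arcsech_pos_s18 {y : ℝ} (h0 : 0 < y) (h1 : y < 1) : 0 < arcsech y :=
  Real.arcosh_pos (one_lt_one_div h0 h1)

lemma sech_pos (t : ℝ) : 0 < sech t :=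
  one_div_pos.mpr (Real.cosh_pos t)

lemma sech_lt_one {t : ℝ} (ht : t ≠ 0) : sech t < 1 :=
  (div_lt_one (Real.cosh_pos t)).mpr (Real.one_lt_cosh.mpr ht)

lemma sech_le_sech {s t : ℝ} (hs : 0 ≤ s) (hst : s ≤ t) : sech t ≤ sech s :=
  one_div_le_one_div_of_le (Real.cosh_pos s)
    (Real.cosh_le_cosh.mpr (by rwa [abs_of_nonneg hs, abs_of_nonneg (hs.trans hst)]))

lemma continuous_sech : Continuous sech :=
  continuous_const.div Real.continuous_cosh fun t => (Real.cosh_pos t).ne'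

lemma hasDerivAt_sech_s18 (t : ℝ) : HasDerivAt sech (-(sinh t / cosh t ^ 2)) t := by
  have h := (Real.hasDerivAt_cosh t).inv (Real.cosh_pos t).ne'
  rw [show cosh⁻¹ = sech from funext fun x => (one_div (cosh x)).symm] at h
  exact h.congr_deriv (neg_div _ _)

lemma abs_cosh_sub_le {x : ℝ} (hx : |x| ≤ 1) : |cosh x - (1 + x ^ 2 / 2)| ≤ x ^ 4 / 16 := by
  have hp := Real.exp_bound hx (n := 4) (by norm_num)
  have hm := Real.exp_bound (x := -x) (by rwa [abs_neg]) (n := 4) (by norm_num)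
  simp only [Finset.sum_range_succ, Finset.sum_range_zero, abs_neg] at hp hm
  norm_num [Nat.factorial] at hp hm
  rw [Real.cosh_eq]
  have h4 : |x| ^ 4 = x ^ 4 := by rw [pow_abs, abs_of_nonneg (by positivity)]
  rw [abs_le] at hp hm ⊢
  constructor <;> nlinarith [hp.1, hp.2, hm.1, hm.2]

lemma cosh_sq_lt_three {x : ℝ} (hx : |x| ≤ 1) : cosh x ^ 2 < 3 :=
  calc cosh x ^ 2 ≤ exp (x ^ 2 / 2) ^ 2 := by
        gcongr; exact Real.cosh_le_exp_half_sq x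
    _ = exp (x ^ 2) := by rw [← Real.exp_nat_mul]; ring_nf
    _ ≤ exp 1 := Real.exp_le_exp.mpr (by rw [← sq_abs]; nlinarith [abs_nonneg x])
    _ < 3 := Real.exp_one_lt_d9.trans (by norm_num)

lemma abs_sech_sub_le {x : ℝ} (hx : |x| ≤ 1) : |sech x - (1 - x ^ 2 / 2)| ≤ x ^ 4 := by
  set r := cosh x - (1 + x ^ 2 / 2)
  have hr : |r| ≤ x ^ 4 / 16 := abs_cosh_sub_le hx
  have hx2 : x ^ 2 ≤ 1 := by rw [← sq_abs]; nlinarith [abs_nonneg x]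
  have key : sech x - (1 - x ^ 2 / 2) = (x ^ 4 / 4 - r * (1 - x ^ 2 / 2)) / cosh x := by
    simp only [sech, r]; field_simp; ring
  rw [key, abs_div, abs_of_pos (Real.cosh_pos x), div_le_iff₀ (Real.cosh_pos x)]
  calc |x ^ 4 / 4 - r * (1 - x ^ 2 / 2)| ≤ x ^ 4 / 4 + |r| * |1 - x ^ 2 / 2| := by
        rw [← abs_mul]
        exact (abs_sub _ _).trans (by rw [abs_of_nonneg (by positivity)])
    _ ≤ x ^ 4 / 4 + x ^ 4 / 16 * 1 := by
        gcongr
        rw [abs_le]; constructor <;> nlinarith [sq_nonneg x]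
    _ ≤ x ^ 4 * 1 := by nlinarith [pow_two_nonneg (x ^ 2)]
    _ ≤ x ^ 4 * cosh x := by gcongr; exact Real.one_le_cosh x

/-- In the coordinate `x = sech t`, the map `h x = sech (a * arcsech x)` becomes `t ↦ sech (a * t)`,
so `x - h x = sechGap a t`. -/
noncomputable def sechGap (a t : ℝ) : ℝ := sech t - sech (a * t)

lemma sechGap_zero (a : ℝ) : sechGap a 0 = 0 := by simp [sechGap]

lemma continuous_sechGap (a : ℝ) : Continuous (sechGap a) :=
  continuous_sech.sub (continuous_sech.comp (continuous_const.mul continuous_id))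

lemma hasDerivAt_sechGap (a t : ℝ) :
    HasDerivAt (sechGap a)
      (a * (sinh (a * t) / cosh (a * t) ^ 2) - sinh t / cosh t ^ 2) t := by
  have h := (hasDerivAt_sech_s18 t).sub
    ((hasDerivAt_sech_s18 (a * t)).comp t ((hasDerivAt_id t).const_mul a))
  exact h.congr_deriv (by ring)

section sechGap

variable {a : ℝ}

lemma strictMonoOn_sechGap (ha : 3 ≤ a) : StrictMonoOn (sechGap a) (Icc 0 a⁻¹) := by
  have ha0 : 0 < a := by linarith
  refine strictMonoOn_of_deriv_pos (convex_Icc _ _) (continuous_sechGap a).continuousOn ?_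
  rw [interior_Icc]
  rintro t ⟨ht0, hta⟩
  rw [(hasDerivAt_sechGap a t).deriv, sub_pos]
  have hat1 : |a * t| ≤ 1 := by
    rw [abs_of_pos (by positivity)]
    calc a * t ≤ a * a⁻¹ := by gcongr
      _ = 1 := mul_inv_cancel₀ ha0.ne'
  have hsinh : 0 < sinh t := Real.sinh_pos_iff.mpr ht0
  calc sinh t / cosh t ^ 2 ≤ sinh t :=
        div_le_self hsinh.le (one_le_pow₀ (Real.one_le_cosh t))
    _ ≤ sinh (a * t) := Real.sinh_le_sinh.mpr (by nlinarith)
    _ < a * (sinh (a * t) / cosh (a * t) ^ 2) := by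
        have hsinh' : 0 < sinh (a * t) := Real.sinh_pos_iff.mpr (by positivity)
        rw [mul_div_assoc', lt_div_iff₀ (by positivity)]
        nlinarith [cosh_sq_lt_three hat1]

lemma sechGap_pos (ha : 3 ≤ a) {t : ℝ} (ht : 0 < t) (hta : t ≤ a⁻¹) : 0 < sechGap a t :=
  sechGap_zero a ▸ strictMonoOn_sechGap ha ⟨le_rfl, by positivity⟩ ⟨ht.le, hta⟩ ht

lemma exists_least_pos_sechGap_eq (ha : 3 ≤ a) {t₀ ε : ℝ} (ht₀ : t₀ ∈ Icc 0 a⁻¹)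
    (hε : 0 < ε) (hε₀ : ε < sechGap a t₀) :
    ∃ t ∈ Ioo 0 t₀, sechGap a t = ε ∧ ∀ s, 0 < s → sechGap a s = ε → t ≤ s := by
  obtain ⟨t, ht, hεt⟩ := intermediate_value_Ioo ht₀.1
    (continuous_sechGap a).continuousOn ⟨(sechGap_zero a).symm ▸ hε, hε₀⟩
  refine ⟨t, ht, hεt, fun s hs hεs => ?_⟩
  by_contra! hst
  have := strictMonoOn_sechGap ha ⟨hs.le, by linarith [ht.2, ht₀.2]⟩
    ⟨ht.1.le, by linarith [ht.2, ht₀.2]⟩ hst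
  linarith

lemma abs_sech_sub_le_sechGap_sq (ha : 3 ≤ a) {t : ℝ} (ht : 0 ≤ t) (hat : a ^ 2 * t ≤ 1) :
    |sech t - (1 - sechGap a t / (a ^ 2 - 1))| ≤ a ^ 4 * sechGap a t ^ 2 := by
  set ε := sechGap a t
  have hta : a * t ≤ 1 := by nlinarith
  have ht1 : t ≤ 1 := by nlinarith
  have hsech : |sech t - (1 - t ^ 2 / 2)| ≤ t ^ 4 := abs_sech_sub_le (by rwa [abs_of_nonneg ht])
  have hgap : |ε - (a ^ 2 - 1) / 2 * t ^ 2| ≤ t ^ 4 + (a * t) ^ 4 :=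
    calc |ε - (a ^ 2 - 1) / 2 * t ^ 2|
        = |(sech t - (1 - t ^ 2 / 2)) - (sech (a * t) - (1 - (a * t) ^ 2 / 2))| := by
          simp only [ε, sechGap]; ring_nf
      _ ≤ t ^ 4 + (a * t) ^ 4 := (abs_sub _ _).trans
          (add_le_add hsech (abs_sech_sub_le (by rwa [abs_of_nonneg (by positivity)])))
  -- `a ^ 2 * t ≤ 1` keeps the quartic error below `2 * t ^ 2`, so that `t ^ 2 ≤ ε / 2`
  have hquartic : t ^ 4 + (a * t) ^ 4 ≤ 2 * t ^ 2 := by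
    have h4 : t ^ 4 ≤ t ^ 2 := pow_le_pow_of_le_one ht ht1 (by norm_num)
    have hat4 : (a * t) ^ 4 ≤ t ^ 2 := by
      rw [show (a * t) ^ 4 = (a ^ 2 * t) ^ 2 * t ^ 2 by ring]
      exact mul_le_of_le_one_left (sq_nonneg t) (pow_le_one₀ (by positivity) hat)
    linarith
  have ha2 : 8 ≤ a ^ 2 - 1 := by nlinarith
  have hε : 2 * t ^ 2 ≤ ε := by
    nlinarith [(abs_le.mp hgap).1, mul_le_mul_of_nonneg_right ha2 (sq_nonneg t)]
  have hsplit : sech t - (1 - ε / (a ^ 2 - 1)) =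
      (sech t - (1 - t ^ 2 / 2)) + (ε - (a ^ 2 - 1) / 2 * t ^ 2) / (a ^ 2 - 1) := by
    field_simp; ring
  calc |sech t - (1 - ε / (a ^ 2 - 1))|
      ≤ t ^ 4 + (t ^ 4 + (a * t) ^ 4) / 8 := by
        rw [hsplit]
        refine (abs_add_le _ _).trans (add_le_add hsech ?_)
        rw [abs_div, abs_of_pos (show 0 < a ^ 2 - 1 by linarith)]
        exact div_le_div₀ (by positivity) hgap (by norm_num) ha2
    _ ≤ a ^ 4 * (2 * t ^ 2) ^ 2 := by
        have ha4 : 1 ≤ a ^ 4 := one_le_pow₀ (by linarith)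
        nlinarith [mul_le_mul_of_nonneg_right ha4 (pow_nonneg ht 4)]
    _ ≤ a ^ 4 * ε ^ 2 := by gcongr

end sechGap

lemma sechGap_arcsech_eq_iff {a ε y : ℝ} (h0 : 0 < y) (h1 : y < 1) :
    sechGap a (arcsech y) = ε ↔ sech (a * arcsech y) + ε = y := by
  rw [sechGap, sech_arcsech h0 h1.le]
  constructor <;> intro h <;> linarith

/-- For small `ε > 0`, the larger solution `x₂ ∈ (0,1)` of `h(x) + ε = x`, where
`h(x) = sech((2L+1)·arcsech x)`, satisfies `x₂ = 1 - ε/(4(L²+L)) + O(ε²)`. -/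
theorem larger_fixed_point_expansion (L : ℕ) (hL : 0 < L) :
    ∃ C ε₀ : ℝ, 0 < C ∧ 0 < ε₀ ∧
      ∀ ε : ℝ, 0 < ε → ε < ε₀ →
        ∃ x₂ : ℝ, x₂ ∈ Set.Ioo (0 : ℝ) 1 ∧
          sech ((2 * L + 1 : ℝ) * arcsech x₂) + ε = x₂ ∧
          (∀ y : ℝ, y ∈ Set.Ioo (0 : ℝ) 1 →
            sech ((2 * L + 1 : ℝ) * arcsech y) + ε = y → y ≤ x₂) ∧
          |x₂ - (1 - ε / (4 * ((L : ℝ) ^ 2 + L)))| ≤ C * ε ^ 2 := by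
  set a : ℝ := 2 * L + 1
  have ha : 3 ≤ a := by
    have : (1 : ℝ) ≤ L := by exact_mod_cast hL
    linarith
  have ht₀ : (a ^ 2)⁻¹ ∈ Icc 0 a⁻¹ := ⟨by positivity, inv_anti₀ (by positivity) (by nlinarith)⟩
  refine ⟨a ^ 4, sechGap a (a ^ 2)⁻¹, by positivity, sechGap_pos ha (by positivity) ht₀.2,
    fun ε hε hε₀ => ?_⟩
  obtain ⟨t, ⟨ht, hta⟩, hεt, hleast⟩ := exists_least_pos_sechGap_eq ha ht₀ hε hε₀
  have hx₂ : sech t ∈ Ioo 0 1 := ⟨sech_pos t, sech_lt_one ht.ne'⟩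
  refine ⟨sech t, hx₂, ?_, fun y ⟨hy0, hy1⟩ hy => ?_, ?_⟩
  · rw [← sechGap_arcsech_eq_iff hx₂.1 hx₂.2, arcsech_sech ht.le, hεt]
  · rw [← sechGap_arcsech_eq_iff hy0 hy1] at hy
    rw [← sech_arcsech hy0 hy1.le]
    exact sech_le_sech ht.le (hleast _ (arcsech_pos_s18 hy0 hy1) hy)
  · have hat : a ^ 2 * t ≤ 1 := by
      rw [← mul_inv_cancel₀ (show a ^ 2 ≠ 0 by positivity)]
      gcongr
    rw [show 4 * ((L : ℝ) ^ 2 + L) = a ^ 2 - 1 by ring, ← hεt]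
    exact abs_sech_sub_le_sechGap_sq ha ht.le hat
end
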